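/- arXiv:1210.6900 — 7 statements merged into one kernel-verified Lean document; each statement's English description precedes it below -/
import Mathlib

section
/- Let R be a ring, d ≥ 1 an integer, U an R-module, and V an R-module admitting a descending chain of submodules V = V₀ ⊇ V₁ ⊇ V₂ ⊇ ⋯ such that every quotient V/V_r has finite length and the canonical map from V to the inverse limit lim_r V/V_r is an isomorphism. If Ext^d_R(U, L) = 0 for every simple R-module L isomorphic to a subquotient of V (i.e., isomorphic to S/T for submodules T ⊆ S ⊆ V), then Ext^d_R(U, V) = 0. -/
/-!
Compute `Ext^{n+1}(U, -)` with a projective resolution `P`: it vanishes at `N` iff every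
`(n+1)`-cocycle `P_{n+1} → N` is a coboundary. By projectivity of the `P_i` this property passes
to extensions, hence from the simple subquotients of `M` to all finite-length subquotients, in
particular to each `M ⧸ V r` and to each kernel `K_r` of `M ⧸ V (r+1) → M ⧸ V r`. Vanishing at
`K_r` lets an `n`-cochain into `M ⧸ V r` be lifted along this surjection, so a primitive of a
cocycle `f` modulo `V r` can be corrected to a primitive modulo `V (r+1)` lying over it. The
resulting compatible primitives glue to a primitive of `f` in `M = lim M ⧸ V r`.
-/

open CategoryTheory

universe u v

/-- `L` is a subquotient of `M`. -/
def Module.IsSubquotient (R M L : Type*) [Ring R] [AddCommGroup M] [Module R M]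
    [AddCommGroup L] [Module R L] : Prop :=
  ∃ (S : Submodule R M) (f : S →ₗ[R] L), Function.Surjective f

namespace Module.IsSubquotient

variable {R M N L : Type*} [Ring R] [AddCommGroup M] [Module R M] [AddCommGroup N] [Module R N]
  [AddCommGroup L] [Module R L]

theorem of_surjective (f : M →ₗ[R] N) (hf : Function.Surjective f) : IsSubquotient R M N :=
  ⟨⊤, f ∘ₗ (⊤ : Submodule R M).subtype, fun y =>
    let ⟨x, hx⟩ := hf y
    ⟨⟨x, trivial⟩, hx⟩⟩

theorem of_submodule (N' : Submodule R N) : IsSubquotient R N N' :=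
  ⟨N', LinearMap.id, Function.surjective_id⟩

theorem trans (hMN : IsSubquotient R M N) (hNL : IsSubquotient R N L) : IsSubquotient R M L := by
  obtain ⟨S, f, hf⟩ := hMN
  obtain ⟨S', g, hg⟩ := hNL
  let e := Submodule.equivMapOfInjective S.subtype S.injective_subtype (S'.comap f)
  let f' : S'.comap f →ₗ[R] S' := f.restrict fun _ h => h
  have hf' : Function.Surjective f' := fun ⟨y, hy⟩ =>
    let ⟨x, hx⟩ := hf y
    ⟨⟨x, by rwa [Submodule.mem_comap, hx]⟩, Subtype.ext hx⟩
  exact ⟨_, g ∘ₗ f' ∘ₗ e.symm.toLinearMap, hg.comp (hf'.comp e.symm.surjective)⟩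

theorem exists_linearEquiv_quotient (h : IsSubquotient R M L) :
    ∃ S T : Submodule R M, T ≤ S ∧ Nonempty (L ≃ₗ[R] (S ⧸ T.comap S.subtype)) := by
  obtain ⟨S, f, hf⟩ := h
  refine ⟨S, (LinearMap.ker f).map S.subtype, Submodule.map_subtype_le _ _, ⟨?_⟩⟩
  rw [Submodule.comap_map_eq_of_injective S.injective_subtype]
  exact (f.quotKerEquivOfSurjective hf).symm

end Module.IsSubquotient

theorem exists_seq_of_forall_exists_succ {α : ℕ → Sort*} (p : ∀ r, α r → Prop)
    (q : ∀ r, α (r + 1) → α r → Prop) {a₀ : α 0} (h₀ : p 0 a₀)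
    (step : ∀ r a, p r a → ∃ b, p (r + 1) b ∧ q r b a) :
    ∃ G : ∀ r, α r, ∀ r, p r (G r) ∧ q r (G (r + 1)) (G r) := by
  choose F hF using step
  let G : ∀ r, {a // p r a} := fun r =>
    Nat.rec ⟨a₀, h₀⟩ (fun r a => ⟨F r a.1 a.2, (hF r a.1 a.2).1⟩) r
  exact ⟨fun r => (G r).1, fun r => ⟨(G r).2, (hF r (G r).1 (G r).2).2⟩⟩

section Filtration

variable {R M N : Type*} [Ring R] [AddCommGroup M] [Module R M] [AddCommGroup N] [Module R N]
  {V : ℕ → Submodule R M} (hV : Antitone V)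
include hV

theorem Submodule.factor_comp_eq_of_succ (G : ∀ r, N →ₗ[R] M ⧸ V r)
    (hG : ∀ r, factor (hV r.le_succ) ∘ₗ G (r + 1) = G r) {r s : ℕ} (h : r ≤ s) :
    factor (hV h) ∘ₗ G s = G r := by
  induction s, h using Nat.le_induction with
  | base => rw [factor, mapQ_id, LinearMap.id_comp]
  | succ s _ ih => rw [← ih, ← hG s, ← LinearMap.comp_assoc, factor_comp]

theorem Submodule.exists_linearMap_mkQ_comp_eq
    (hinj : ∀ m : M, (∀ r, (Quotient.mk m : M ⧸ V r) = 0) → m = 0)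
    (hsurj : ∀ f : (r : ℕ) → M ⧸ V r, (∀ r s (h : r ≤ s), factor (hV h) (f s) = f r) →
      ∃ m : M, ∀ r, (Quotient.mk m : M ⧸ V r) = f r)
    (G : ∀ r, N →ₗ[R] M ⧸ V r) (hG : ∀ r, factor (hV r.le_succ) ∘ₗ G (r + 1) = G r) :
    ∃ g : N →ₗ[R] M, ∀ r, (V r).mkQ ∘ₗ g = G r := by
  choose m hm using fun x => hsurj (fun r => G r x) fun r s h =>
    LinearMap.congr_fun (factor_comp_eq_of_succ hV G hG h) x
  have eq_of_mk_eq (a b : M) (h : ∀ r, (Quotient.mk a : M ⧸ V r) = Quotient.mk b) : a = b :=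
    sub_eq_zero.mp (hinj _ fun r => by rw [Quotient.mk_sub, h r, sub_self])
  refine ⟨⟨⟨m, fun x y => eq_of_mk_eq _ _ fun r => ?_⟩, fun c x => eq_of_mk_eq _ _ fun r => ?_⟩,
    fun r => LinearMap.ext fun x => hm x r⟩
  · rw [Quotient.mk_add, hm, hm, hm, map_add]
  · rw [Quotient.mk_smul, hm, hm, map_smul]
    rfl

end Filtration

namespace ChainComplex

variable {R : Type u} [Ring R] (C : ChainComplex (ModuleCat.{u} R) ℕ) (n : ℕ)

/-- The cohomology of `Hom_R(C, N)` vanishes in degree `n + 1`. -/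
def CocyclesAreCoboundaries (N : Type*) [AddCommGroup N] [Module R N] : Prop :=
  ∀ f : C.X (n + 1) →ₗ[R] N, f ∘ₗ (C.d (n + 2) (n + 1)).hom = 0 →
    ∃ g : C.X n →ₗ[R] N, g ∘ₗ (C.d (n + 1) n).hom = f

theorem d_hom_comp_d_hom (i j k : ℕ) : (C.d j k).hom ∘ₗ (C.d i j).hom = 0 := by
  rw [← ModuleCat.hom_comp, C.d_comp_d, ModuleCat.hom_zero]

namespace CocyclesAreCoboundaries

variable {C n} {B B' : Type*} [AddCommGroup B] [Module R B] [AddCommGroup B'] [Module R B']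

theorem of_subsingleton [Subsingleton B] : C.CocyclesAreCoboundaries n B :=
  fun _ _ => ⟨0, Subsingleton.elim _ _⟩

theorem exists_comp_d_eq_of_comp_eq_zero (π : B →ₗ[R] B')
    (hker : C.CocyclesAreCoboundaries n (LinearMap.ker π)) {k : C.X (n + 1) →ₗ[R] B}
    (hkπ : π ∘ₗ k = 0) (hkd : k ∘ₗ (C.d (n + 2) (n + 1)).hom = 0) :
    ∃ v : C.X n →ₗ[R] B, π ∘ₗ v = 0 ∧ v ∘ₗ (C.d (n + 1) n).hom = k := by
  have hk (x : C.X (n + 1)) : k x ∈ LinearMap.ker π := LinearMap.congr_fun hkπ x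
  obtain ⟨v, hv⟩ := hker (k.codRestrict _ hk) <| by
    ext x
    exact LinearMap.congr_fun hkd x
  refine ⟨(LinearMap.ker π).subtype ∘ₗ v, ?_, ?_⟩
  · ext x
    exact (v x).2
  · rw [LinearMap.comp_assoc, hv, LinearMap.subtype_comp_codRestrict]

variable [∀ i, Projective (C.X i)]

section Surjective

variable (π : B →ₗ[R] B') (hπ : Function.Surjective π)
  (hker : C.CocyclesAreCoboundaries n (LinearMap.ker π))
include hπ hker

theorem of_surjective (hB' : C.CocyclesAreCoboundaries n B') : C.CocyclesAreCoboundaries n B := by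
  intro f hf
  obtain ⟨g, hg⟩ := hB' (π ∘ₗ f) (by rw [LinearMap.comp_assoc, hf, LinearMap.comp_zero])
  obtain ⟨g₀, hg₀⟩ := Module.projective_lifting_property π g hπ
  obtain ⟨v, -, hv⟩ := exists_comp_d_eq_of_comp_eq_zero π hker
    (k := f - g₀ ∘ₗ (C.d (n + 1) n).hom)
    (by rw [LinearMap.comp_sub, ← LinearMap.comp_assoc, hg₀, hg, sub_self])
    (by rw [LinearMap.sub_comp, hf, LinearMap.comp_assoc, d_hom_comp_d_hom,
      LinearMap.comp_zero, sub_zero])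
  exact ⟨g₀ + v, by rw [LinearMap.add_comp, hv, add_sub_cancel]⟩

theorem exists_lift_of_comp_d_eq {f : C.X (n + 1) →ₗ[R] B} {h : C.X n →ₗ[R] B}
    (hh : h ∘ₗ (C.d (n + 1) n).hom = f) {g : C.X n →ₗ[R] B'}
    (hg : g ∘ₗ (C.d (n + 1) n).hom = π ∘ₗ f) :
    ∃ g' : C.X n →ₗ[R] B, g' ∘ₗ (C.d (n + 1) n).hom = f ∧ π ∘ₗ g' = g := by
  -- `π ∘ₗ h - g` is an `n`-cocycle; it lifts to the cocycle `c - v` in `B`, and `h - (c - v)` works.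
  obtain ⟨c, hc⟩ := Module.projective_lifting_property π (π ∘ₗ h - g) hπ
  obtain ⟨v, hvπ, hv⟩ := exists_comp_d_eq_of_comp_eq_zero π hker
    (k := c ∘ₗ (C.d (n + 1) n).hom)
    (by rw [← LinearMap.comp_assoc, hc, LinearMap.sub_comp, LinearMap.comp_assoc, hh, hg,
      sub_self])
    (by rw [LinearMap.comp_assoc, d_hom_comp_d_hom, LinearMap.comp_zero])
  refine ⟨h - (c - v), ?_, ?_⟩
  · rw [LinearMap.sub_comp, LinearMap.sub_comp, hv, sub_self, sub_zero, hh]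
  · rw [LinearMap.comp_sub, LinearMap.comp_sub, hc, hvπ, sub_zero, sub_sub_cancel]

end Surjective

theorem of_isFiniteLength {N : Type v} [AddCommGroup N] [Module R N] (hN : IsFiniteLength R N)
    (hsimple : ∀ (L : Type v) [AddCommGroup L] [Module R L], IsSimpleModule R L →
      Module.IsSubquotient R N L → C.CocyclesAreCoboundaries n L) :
    C.CocyclesAreCoboundaries n N := by
  induction hN with
  | of_subsingleton => exact of_subsingleton
  | @of_simple_quotient N _ _ N' _ _ ih =>
    refine of_surjective N'.mkQ N'.mkQ_surjective ?_
      (hsimple (N ⧸ N') ‹_› (.of_surjective _ N'.mkQ_surjective))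
    rw [Submodule.ker_mkQ]
    exact ih fun L _ _ hL hLN' => hsimple L hL ((Module.IsSubquotient.of_submodule N').trans hLN')

theorem of_complete {M : Type*} [AddCommGroup M] [Module R M] {V : ℕ → Submodule R M}
    (hV0 : V 0 = ⊤) (hV : Antitone V)
    (hinj : ∀ m : M, (∀ r, (Submodule.Quotient.mk m : M ⧸ V r) = 0) → m = 0)
    (hsurj : ∀ f : (r : ℕ) → M ⧸ V r, (∀ r s (h : r ≤ s), Submodule.factor (hV h) (f s) = f r) →
      ∃ m : M, ∀ r, (Submodule.Quotient.mk m : M ⧸ V r) = f r)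
    (hquot : ∀ r, C.CocyclesAreCoboundaries n (M ⧸ V r))
    (hker : ∀ r : ℕ, C.CocyclesAreCoboundaries n
      (LinearMap.ker (Submodule.factor (hV r.le_succ)))) :
    C.CocyclesAreCoboundaries n M := by
  intro f hf
  have step (r : ℕ) (g : C.X n →ₗ[R] M ⧸ V r)
      (hg : g ∘ₗ (C.d (n + 1) n).hom = (V r).mkQ ∘ₗ f) :
      ∃ g' : C.X n →ₗ[R] M ⧸ V (r + 1), g' ∘ₗ (C.d (n + 1) n).hom = (V (r + 1)).mkQ ∘ₗ f ∧
        Submodule.factor (hV r.le_succ) ∘ₗ g' = g := by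
    obtain ⟨h, hh⟩ := hquot (r + 1) ((V (r + 1)).mkQ ∘ₗ f)
      (by rw [LinearMap.comp_assoc, hf, LinearMap.comp_zero])
    exact exists_lift_of_comp_d_eq _ (Submodule.factor_surjective _) (hker r) hh
      (by rw [hg, ← LinearMap.comp_assoc, Submodule.factor_comp_mk])
  have : Subsingleton (M ⧸ V 0) := Submodule.Quotient.subsingleton_iff.mpr hV0
  obtain ⟨G, hG⟩ := exists_seq_of_forall_exists_succ _ _ (a₀ := 0) (Subsingleton.elim _ _) step
  obtain ⟨g, hg⟩ := Submodule.exists_linearMap_mkQ_comp_eq hV hinj hsurj G fun r => (hG r).2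
  refine ⟨g, LinearMap.ext fun x => sub_eq_zero.mp (hinj _ fun r => ?_)⟩
  rw [Submodule.Quotient.mk_sub, sub_eq_zero]
  exact (LinearMap.congr_fun (hg r) _).trans (LinearMap.congr_fun (hG r).1 x)

end CocyclesAreCoboundaries

end ChainComplex

theorem CategoryTheory.ProjectiveResolution.subsingleton_ext_succ_iff {R : Type u} [Ring R]
    {X : ModuleCat.{u} R} (P : ProjectiveResolution X) (n : ℕ) (N : Type u) [AddCommGroup N]
    [Module R N] :
    Subsingleton (((Ext ℤ (ModuleCat.{u} R) (n + 1)).obj (Opposite.op X)).obj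
      (ModuleCat.of R N)) ↔ P.complex.CocyclesAreCoboundaries n N := by
  rw [← ModuleCat.isZero_iff_subsingleton, (P.isoExt (n + 1) _).isZero_iff,
    ← HomologicalComplex.exactAt_iff_isZero_homology,
    HomologicalComplex.exactAt_iff' _ n (n + 1) (n + 2) (by simp) (by simp),
    ShortComplex.moduleCat_exact_iff]
  constructor
  · intro h f hf
    obtain ⟨g, hg⟩ := h (ModuleCat.ofHom f) (ModuleCat.hom_ext hf)
    exact ⟨g.hom, congr_arg ModuleCat.Hom.hom hg⟩
  · intro h f hf
    obtain ⟨g, hg⟩ := h f.hom (congr_arg ModuleCat.Hom.hom hf)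
    exact ⟨ModuleCat.ofHom g, ModuleCat.hom_ext hg⟩

/-- Let `R` be a ring, `d ≥ 1`, `U` an `R`-module and `M` an `R`-module
admitting a descending chain of submodules `M = V 0 ⊇ V 1 ⊇ ⋯` such that every quotient
`M ⧸ V r` has finite length and the canonical map from `M` to the inverse limit of the
`M ⧸ V r` is an isomorphism (encoded as injectivity plus surjectivity onto compatible
sequences).  If `Ext^d(U, L) = 0` for every simple module `L` which is a subquotient of `M`,
then `Ext^d(U, M) = 0`. -/
theorem stmt0 (R : Type u) [Ring R] (d : ℕ) (hd : 1 ≤ d)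
    (U : Type u) [AddCommGroup U] [Module R U]
    (M : Type u) [AddCommGroup M] [Module R M]
    (V : ℕ → Submodule R M) (hV0 : V 0 = ⊤) (hVanti : ∀ r s : ℕ, r ≤ s → V s ≤ V r)
    (hfl : ∀ r : ℕ, IsFiniteLength R (M ⧸ V r))
    (hinj : ∀ m : M, (∀ r : ℕ, (Submodule.Quotient.mk m : M ⧸ V r) = 0) → m = 0)
    (hsurj : ∀ f : (r : ℕ) → M ⧸ V r,
      (∀ (r s : ℕ) (h : r ≤ s),
        Submodule.mapQ (V s) (V r) LinearMap.id (by simpa using hVanti r s h) (f s) = f r) →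
      ∃ m : M, ∀ r : ℕ, (Submodule.Quotient.mk m : M ⧸ V r) = f r)
    (hext : ∀ (L : Type u) [AddCommGroup L] [Module R L], IsSimpleModule R L →
      (∃ S T : Submodule R M, T ≤ S ∧
        Nonempty (L ≃ₗ[R] (↥S ⧸ Submodule.comap S.subtype T))) →
      Subsingleton (((Ext ℤ (ModuleCat.{u} R) d).obj
        (Opposite.op (ModuleCat.of R U))).obj (ModuleCat.of R L))) :
    Subsingleton (((Ext ℤ (ModuleCat.{u} R) d).obj
      (Opposite.op (ModuleCat.of R U))).obj (ModuleCat.of R M)) := by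
  obtain ⟨n, rfl⟩ : ∃ n, d = n + 1 := ⟨d - 1, by omega⟩
  let P := projectiveResolution (ModuleCat.of R U)
  have hfinite (N : Type u) [AddCommGroup N] [Module R N] (hN : IsFiniteLength R N)
      (hNM : Module.IsSubquotient R M N) : P.complex.CocyclesAreCoboundaries n N :=
    .of_isFiniteLength hN fun L _ _ hL hLN => (P.subsingleton_ext_succ_iff n L).mp
      (hext L hL (hNM.trans hLN).exists_linearEquiv_quotient)
  have hsubquot (r : ℕ) : Module.IsSubquotient R M (M ⧸ V r) :=
    .of_surjective _ (V r).mkQ_surjective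
  rw [P.subsingleton_ext_succ_iff]
  exact .of_complete hV0 hVanti hinj hsurj (fun r => hfinite _ (hfl r) (hsubquot r)) fun r =>
    hfinite _ ((hfl (r + 1)).of_injective (Submodule.injective_subtype _))
      ((hsubquot (r + 1)).trans (.of_submodule _))
end

section
/- Let ≺ be a convex ordering on a positive system R⁺ of a finite, reduced, crystallographic root system R, and let α ∈ R⁺. If λ ∈ KP(α) is minimal, with respect to the partial order on KP(α), among the elements strictly greater than the one-part Kostant partition (α), then λ has exactly two parts: λ = (β, γ) for positive roots β, γ ∈ R⁺ with β + γ = α and β ≻ α ≻ γ. -/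
/-- A Kostant partition of `ν` (with respect to the set `Rplus` of positive roots and the
convex ordering `lt`): a list of positive roots which is non-increasing with respect to
`lt` and sums to `ν`. -/
def IsKostantPartition {M : Type*} [AddCommMonoid M]
    (Rplus : Set M) (lt : M → M → Prop) (ν : M) (lam : List M) : Prop :=
  (∀ x ∈ lam, x ∈ Rplus) ∧ lam.Chain' (fun a b => b = a ∨ lt b a) ∧ lam.sum = ν

/-- The strict partial order on Kostant partitions: `lam ≺ mu` iff (i) the first entry where
they differ (both being defined) is smaller in `lam`, and (ii) the first entry from the end
where they differ (both being defined) is larger in `lam`. -/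
def KPlt {M : Type*} (lt : M → M → Prop) (lam mu : List M) : Prop :=
  (∃ k : ℕ, (∀ r < k, lam[r]? = mu[r]?) ∧
      ∃ a b, lam[k]? = some a ∧ mu[k]? = some b ∧ lt a b) ∧
  (∃ k : ℕ, (∀ r < k, lam.reverse[r]? = mu.reverse[r]?) ∧
      ∃ a b, lam.reverse[k]? = some a ∧ mu.reverse[k]? = some b ∧ lt b a)

/-!
A Kostant partition of `α` with at least two parts is always greater than `(α)`, i.e. its first
part is `≻ α` and its last part `≺ α`. Indeed, the positive roots `≺ α` are closed under sums
that are roots (by convexity, and because `β + β` is never a root in a reduced system), and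
whenever `α = β₁ + ⋯ + βₙ` with `n ≥ 2` some `α - βᵢ` is again a positive root (as
`⟨α, α^∨⟩ = 2 > 0`, some `⟨βᵢ, α^∨⟩ > 0`); by induction on `n`, if all parts were `≺ α` then
so would be `α`. The same holds for `≻ α`.

If the minimal `λ` had three or more parts, two of them, `x ≻ y`, would sum to a positive root
`σ` (otherwise the set of parts would be closed under such sums, forcing `α` to be a part), and
`y ≺ σ ≺ x` by convexity. Replacing `x, y` by `σ` gives a Kostant partition `μ` of `α` with at
least two parts, so `(α) ≺ μ`, and `μ ≺ λ` since the change only lowers the first and raises the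
last entry of the block of `λ` running from `x` to `y`.
-/

section KPlt

variable {α β : Type*}

theorem KPlt.map {r : α → α → Prop} {s : β → β → Prop} (g : α → β)
    (hg : ∀ a b, r a b → s (g a) (g b)) {l m : List α} (h : KPlt r l m) :
    KPlt s (l.map g) (m.map g) := by
  obtain ⟨⟨k, hk, a, b, ha, hb, hab⟩, ⟨k', hk', a', b', ha', hb', hab'⟩⟩ := h
  refine ⟨⟨k, fun i hi => by simp [hk i hi], g a, g b, by simp [ha], by simp [hb], hg _ _ hab⟩,
    ⟨k', fun i hi => ?_, g a', g b', ?_, ?_, hg _ _ hab'⟩⟩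
  · simp [← List.map_reverse, hk' i hi]
  · simp [← List.map_reverse, ha']
  · simp [← List.map_reverse, hb']

theorem kpLt_singleton_iff {r : α → α → Prop} {a : α} {l : List α} :
    KPlt r [a] l ↔ (∃ b ∈ l.head?, r a b) ∧ ∃ c ∈ l.getLast?, r c a := by
  constructor
  · rintro ⟨⟨_ | k, -, a₁, b, ha, hb, h⟩, ⟨_ | k', -, a₂, c, ha', hc, h'⟩⟩ <;>
      simp_all [List.head?_eq_getElem?, ← List.head?_reverse]
  · rintro ⟨⟨b, hb, hab⟩, ⟨c, hc, hca⟩⟩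
    exact ⟨⟨0, by simp, a, b, rfl, by simpa [List.head?_eq_getElem?] using hb, hab⟩,
      ⟨0, by simp, a, c, rfl, by simpa [← List.head?_reverse, List.head?_eq_getElem?] using hc,
        hca⟩⟩

theorem kpLt_append_append {r : α → α → Prop} {A U V C : List α} (hU : U ≠ [])
    (hV : V ≠ []) (hhead : r (U.head hU) (V.head hV)) (hlast : r (V.getLast hV) (U.getLast hU)) :
    KPlt r (A ++ U ++ C) (A ++ V ++ C) := by
  refine ⟨⟨A.length, fun k hk => ?_, U.head hU, V.head hV, ?_, ?_, hhead⟩,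
    ⟨C.length, fun k hk => ?_, U.getLast hU, V.getLast hV, ?_, ?_, hlast⟩⟩
  · simp [List.append_assoc, List.getElem?_append_left hk]
  · obtain ⟨u, U, rfl⟩ := List.exists_cons_of_ne_nil hU
    simp
  · obtain ⟨v, V, rfl⟩ := List.exists_cons_of_ne_nil hV
    simp
  · simp [List.getElem?_append_left (by simpa using hk : k < C.reverse.length)]
  · obtain ⟨U, u, rfl⟩ : ∃ U' u, U = U' ++ [u] :=
      ⟨_, _, (List.dropLast_append_getLast hU).symm⟩
    simp
  · obtain ⟨V, v, rfl⟩ : ∃ V' v, V = V' ++ [v] :=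
      ⟨_, _, (List.dropLast_append_getLast hV).symm⟩
    simp

end KPlt

namespace List.Pairwise

variable {α : Type*} [LinearOrder α] {l : List α}

theorem exists_eq_append_cons_forall_lt (hl : l.Pairwise (· ≥ ·)) {x : α} (hx : x ∈ l) :
    ∃ A B, l = A ++ x :: B ∧ ∀ b ∈ B, b < x := by
  induction l with
  | nil => simp at hx
  | cons a t ih =>
    rw [List.pairwise_cons] at hl
    by_cases hxt : x ∈ t
    · obtain ⟨A, B, rfl, hB⟩ := ih hl.2 hxt
      exact ⟨a :: A, B, rfl, hB⟩
    · obtain rfl : x = a := by simpa [hxt] using hx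
      exact ⟨[], t, rfl, fun b hb => (hl.1 b hb).lt_of_ne (ne_of_mem_of_not_mem hb hxt)⟩

theorem exists_eq_append_cons_forall_gt (hl : l.Pairwise (· ≥ ·)) {y : α} (hy : y ∈ l) :
    ∃ D C, l = D ++ y :: C ∧ ∀ d ∈ D, y < d := by
  induction l with
  | nil => simp at hy
  | cons a t ih =>
    rw [List.pairwise_cons] at hl
    by_cases hya : y = a
    · exact ⟨[], t, by rw [hya, List.nil_append], by simp⟩
    · obtain ⟨D, C, rfl, hD⟩ := ih hl.2 (by simpa [hya] using hy)
      exact ⟨a :: D, C, rfl, List.forall_mem_cons.2 ⟨(hl.1 y (by simp)).lt_of_ne hya, hD⟩⟩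

/-- Taking `x` at its last and `y` at its first occurrence, the entries of `l` between them lie
strictly between `y` and `x`, hence so does every entry of the re-sorted block replacing them. -/
theorem exists_kpLt_of_merge (hl : l.Pairwise (· ≥ ·)) {x y σ : α} (hx : x ∈ l) (hy : y ∈ l)
    (hσx : σ < x) (hyσ : y < σ) :
    ∃ m : List α, m.Pairwise (· ≥ ·) ∧ (σ :: l).Perm (x :: y :: m) ∧ KPlt (· < ·) m l := by
  obtain ⟨A, B, rfl, hB⟩ := hl.exists_eq_append_cons_forall_lt hx
  rw [List.pairwise_append, List.pairwise_cons] at hl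
  obtain ⟨hA, ⟨-, hB'⟩, hAB⟩ := hl
  have hyB : y ∈ B := by
    rcases List.mem_append.1 hy with hyA | hyxB
    · exact absurd (hAB y hyA x (by simp)) (by simpa using hyσ.trans hσx)
    · simpa [(hyσ.trans hσx).ne] using hyxB
  obtain ⟨D, C, rfl, hD⟩ := hB'.exists_eq_append_cons_forall_gt hyB
  set N := (σ :: D).insertionSort (· ≥ ·)
  have hN : N.Perm (σ :: D) := List.perm_insertionSort _ _
  have hNx : ∀ z ∈ N, y < z ∧ z < x := by
    intro z hz
    rcases List.mem_cons.1 (hN.subset hz) with rfl | hzD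
    · exact ⟨hyσ, hσx⟩
    · exact ⟨hD z hzD, hB z (by simp [hzD])⟩
  have hNne : N ≠ [] := List.ne_nil_of_mem (hN.mem_iff.2 List.mem_cons_self)
  refine ⟨A ++ N ++ C, ?_, ?_, ?_⟩
  · have hyC := List.pairwise_cons.1 (List.pairwise_append.1 hB').2.1
    simp only [List.pairwise_append]
    refine ⟨⟨hA, List.pairwise_insertionSort _ _, fun a ha z hz => ?_⟩, hyC.2, ?_⟩
    · exact (hNx z hz).2.le.trans (hAB a ha x List.mem_cons_self)
    · intro z hz c hc
      rcases List.mem_append.1 hz with hzA | hzN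
      · exact (hB c (by simp [hc])).le.trans (hAB z hzA x List.mem_cons_self)
      · exact (hyC.1 c hc).trans (hNx z hzN).1.le
  · refine List.Perm.trans ?_ (((hN.append_left A).append_right C).symm.cons y |>.cons x)
    simp only [List.perm_iff_count, List.count_cons, List.count_append]
    intro a
    split_ifs <;> omega
  · simpa using kpLt_append_append (r := (· < ·)) (A := A) (C := C) hNne
      (List.cons_ne_nil x (D ++ [y])) (hNx _ (List.head_mem hNne)).2
      (by simpa using (hNx _ (List.getLast_mem hNne)).1)

end List.Pairwise

def IsConvexOrder {M : Type*} [Add M] (S : Set M) [LinearOrder S] : Prop :=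
  ∀ a b c : S, (c : M) = a + b → a < b → a < c ∧ c < b

section ConvexOrder

variable {M : Type*} [AddCommMonoid M] {S : Set M} [LinearOrder S]

theorem IsConvexOrder.min_lt_and_lt_max (hS : IsConvexOrder S) {a b c : S}
    (hc : (c : M) = a + b) (hab : a ≠ b) : min a b < c ∧ c < max a b := by
  rcases hab.lt_or_gt with h | h
  · simpa [h.le] using hS a b c hc h
  · simpa [h.le, and_comm] using hS b a c (by rw [hc, add_comm]) h

theorem isKostantPartition_map_val_iff {lt : M → M → Prop} (hlt : ∀ a b : S, lt a b ↔ a < b)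
    {ν : M} {l : List S} :
    IsKostantPartition S lt ν (l.map Subtype.val) ↔
      l.Pairwise (· ≥ ·) ∧ (l.map Subtype.val).sum = ν := by
  change (∀ x ∈ l.map Subtype.val, x ∈ S) ∧ (l.map Subtype.val).IsChain _ ∧ _ ↔ _
  simp only [List.forall_mem_map, Subtype.coe_prop, implies_true, true_and, List.isChain_map, hlt,
    ← Subtype.ext_iff, ← le_iff_eq_or_lt, List.isChain_iff_pairwise]

end ConvexOrder

section PositiveSum

variable {M R : Type*} [AddCommMonoid M] [AddCommMonoid R] [PartialOrder R]
  [IsOrderedCancelAddMonoid R] (f : M →+ R) {L : List M}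

theorem map_list_sum_pos (hL : ∀ x ∈ L, 0 < f x) (hne : L ≠ []) : 0 < f L.sum := by
  rw [map_list_sum]
  exact List.sum_pos _ (by simpa using hL) (by simpa using hne)

theorem ne_list_sum_of_mem (hL : ∀ x ∈ L, 0 < f x) (h2 : 2 ≤ L.length) {z : M} (hz : z ∈ L) :
    z ≠ L.sum := by
  classical
  intro hzL
  have hrest : 0 < f (L.erase z).sum := map_list_sum_pos f
    (fun x hx => hL x (List.mem_of_mem_erase hx))
    (by rw [← List.length_pos_iff, List.length_erase_of_mem hz]; omega)
  have := congrArg f (List.sum_erase hz)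
  rw [map_add, ← hzL] at this
  exact hrest.ne' (by simpa using this)

end PositiveSum

namespace RootPairing

variable {ι R M N : Type*} [Field R] [LinearOrder R] [IsStrictOrderedRing R]
  [AddCommGroup M] [Module R M] [AddCommGroup N] [Module R N] (P : RootPairing ι R M N)

def positiveRoots (f : M →ₗ[R] R) : Set M := {x | x ∈ Set.range P.root ∧ 0 < f x}

variable {P} {f : M →ₗ[R] R}

theorem coe_ne_sum_of_mem {l : List (P.positiveRoots f)} (h2 : 2 ≤ l.length)
    {z : P.positiveRoots f} (hz : z ∈ l) : (z : M) ≠ (l.map Subtype.val).sum := by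
  refine ne_list_sum_of_mem f.toAddMonoidHom ?_ (by simpa using h2) (List.mem_map_of_mem hz)
  intro x hx
  obtain ⟨y, -, rfl⟩ := List.mem_map.1 hx
  exact y.2.2

theorem ne_of_add_mem_positiveRoots [P.IsReduced] {x y : P.positiveRoots f}
    (h : (x : M) + y ∈ P.positiveRoots f) : x ≠ y := by
  rintro rfl
  obtain ⟨⟨i, hi⟩, -⟩ := x.2
  have : IsAddTorsionFree M := .of_isTorsionFree R M
  rw [← hi, ← two_nsmul] at h
  exact P.nsmul_notMem_range_root h.1

variable [Finite ι] [P.IsCrystallographic]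

theorem exists_mem_sum_erase_mem_positiveRoots [DecidableEq M] {L : List M}
    (hL : ∀ x ∈ L, x ∈ P.positiveRoots f) (h2 : 2 ≤ L.length)
    (hsum : L.sum ∈ P.positiveRoots f) : ∃ β ∈ L, (L.erase β).sum ∈ P.positiveRoots f := by
  obtain ⟨⟨i, hi⟩, -⟩ := hsum
  obtain ⟨β, hβ, hpos⟩ : ∃ β ∈ L, 0 < P.coroot' i β := by
    by_contra! h
    have : P.coroot' i L.sum ≤ 0 := by
      simpa [map_list_sum] using List.sum_le_card_nsmul (L.map (P.coroot' i)) 0 (by simpa using h)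
    rw [← hi, root_coroot'_eq_pairing, pairing_same] at this
    norm_num at this
  obtain ⟨⟨j, rfl⟩, -⟩ := hL β hβ
  have hfL : ∀ x ∈ L, 0 < f.toAddMonoidHom x := fun x hx => (hL x hx).2
  have hrest : 0 < f (L.erase (P.root j)).sum := map_list_sum_pos f.toAddMonoidHom
    (fun x hx => hfL x (List.mem_of_mem_erase hx))
    (by rw [← List.length_pos_iff, List.length_erase_of_mem hβ]; omega)
  refine ⟨P.root j, hβ, ?_, hrest⟩
  have hji : j ≠ i := by
    rintro rfl
    exact ne_list_sum_of_mem _ hfL h2 hβ hi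
  rw [root_coroot'_eq_pairing, ← P.algebraMap_pairingIn ℤ, algebraMap_int_eq, eq_intCast,
    Int.cast_pos] at hpos
  have := P.root_sub_root_mem_of_pairingIn_pos hpos hji
  rwa [← neg_mem_range_root_iff, neg_sub, hi, ← List.sum_erase hβ, add_sub_cancel_left] at this

theorem sum_mem_of_add_mem {Q : Set M} (hQ : Q ⊆ P.positiveRoots f)
    (hadd : ∀ x ∈ Q, ∀ y ∈ Q, x + y ∈ P.positiveRoots f → x + y ∈ Q) {L : List M}
    (hL : ∀ x ∈ L, x ∈ Q) (hne : L ≠ []) (hsum : L.sum ∈ P.positiveRoots f) : L.sum ∈ Q := by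
  classical
  rcases Nat.lt_or_ge L.length 2 with h1 | h2
  · obtain ⟨x, rfl⟩ : ∃ x, L = [x] :=
      List.length_eq_one_iff.1 (by have := List.length_pos_iff.2 hne; omega)
    simpa using hL
  obtain ⟨β, hβ, hrest⟩ :=
    exists_mem_sum_erase_mem_positiveRoots (fun x hx => hQ (hL x hx)) h2 hsum
  have hlen := List.length_erase_of_mem hβ
  have ih : (L.erase β).sum ∈ Q := sum_mem_of_add_mem hQ hadd
    (fun x hx => hL x (List.mem_of_mem_erase hx))
    (by rw [← List.length_pos_iff]; omega) hrest
  rw [← List.sum_erase hβ] at hsum ⊢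
  exact hadd β (hL β hβ) _ ih hsum
termination_by L.length
decreasing_by omega

theorem mem_of_forall_mem_of_sum_eq {T : Set (P.positiveRoots f)}
    (hT : ∀ a b c : P.positiveRoots f, (c : M) = a + b → a ∈ T → b ∈ T → c ∈ T)
    {l : List (P.positiveRoots f)} (hl : ∀ z ∈ l, z ∈ T) (hne : l ≠ [])
    {c : P.positiveRoots f} (hc : (l.map Subtype.val).sum = c) : c ∈ T := by
  have := sum_mem_of_add_mem (Q := Subtype.val '' T) (Subtype.coe_image_subset _ T) ?_
    (L := l.map Subtype.val) ?_ (mt List.map_eq_nil_iff.1 hne) (hc ▸ c.2)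
  · rwa [hc, Subtype.val_injective.mem_set_image] at this
  · rintro _ ⟨a, ha, rfl⟩ _ ⟨b, hb, rfl⟩ hab
    exact ⟨⟨_, hab⟩, hT a b _ rfl ha hb, rfl⟩
  · intro x hx
    obtain ⟨z, hz, rfl⟩ := List.mem_map.1 hx
    exact ⟨z, hl z hz, rfl⟩

variable [P.IsReduced] [LinearOrder (P.positiveRoots f)]

theorem exists_mem_gt_and_exists_mem_lt (hconv : IsConvexOrder (P.positiveRoots f))
    {l : List (P.positiveRoots f)} (h2 : 2 ≤ l.length) {a : P.positiveRoots f}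
    (hsum : (l.map Subtype.val).sum = a) : (∃ z ∈ l, a < z) ∧ ∃ z ∈ l, z < a := by
  have hne : ∀ z ∈ l, z ≠ a := by
    rintro z hz rfl
    exact coe_ne_sum_of_mem h2 hz hsum.symm
  have hlne : l ≠ [] := by rintro rfl; simp at h2
  constructor
  · by_contra! h
    refine lt_irrefl a (mem_of_forall_mem_of_sum_eq (T := Set.Iio a) ?_
      (fun z hz => (h z hz).lt_of_ne (hne z hz)) hlne hsum)
    intro b c d hd hb hc
    exact (hconv.min_lt_and_lt_max hd (ne_of_add_mem_positiveRoots (hd ▸ d.2))).2.trans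
      (max_lt hb hc)
  · by_contra! h
    refine lt_irrefl a (mem_of_forall_mem_of_sum_eq (T := Set.Ioi a) ?_
      (fun z hz => (h z hz).lt_of_ne' (hne z hz)) hlne hsum)
    intro b c d hd hb hc
    exact (lt_min hb hc).trans
      (hconv.min_lt_and_lt_max hd (ne_of_add_mem_positiveRoots (hd ▸ d.2))).1

variable {lt : M → M → Prop} (hconv : IsConvexOrder (P.positiveRoots f))
  (hlt : ∀ a b : P.positiveRoots f, lt a b ↔ a < b)
include hconv hlt

theorem kpLt_singleton_of_two_le_length {α : M} (hα : α ∈ P.positiveRoots f) {mu : List M}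
    (hmu : IsKostantPartition (P.positiveRoots f) lt α mu) (h2 : 2 ≤ mu.length) :
    KPlt lt [α] mu := by
  lift mu to List (P.positiveRoots f) using hmu.1
  obtain ⟨hsorted, hsum⟩ := (isKostantPartition_map_val_iff hlt).1 hmu
  have hmune : mu ≠ [] := by rintro rfl; simp at h2
  obtain ⟨⟨z, hz, haz⟩, ⟨z', hz', hza⟩⟩ :=
    exists_mem_gt_and_exists_mem_lt hconv (by simpa using h2) (a := ⟨α, hα⟩) hsum
  refine KPlt.map Subtype.val (fun b c h => (hlt b c).2 h) (l := [⟨α, hα⟩])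
    (kpLt_singleton_iff.2 ⟨?_, ?_⟩)
  · obtain ⟨b, t, rfl⟩ := List.exists_cons_of_ne_nil hmune
    refine ⟨b, rfl, haz.trans_le ?_⟩
    rcases List.mem_cons.1 hz with rfl | hzt
    · rfl
    · exact (List.pairwise_cons.1 hsorted).1 z hzt
  · obtain ⟨t, e, rfl⟩ : ∃ t e, mu = t ++ [e] :=
      ⟨_, _, (List.dropLast_append_getLast hmune).symm⟩
    refine ⟨e, by simp, lt_of_le_of_lt ?_ hza⟩
    rcases List.mem_append.1 hz' with hzt | hze
    · exact (List.pairwise_append.1 hsorted).2.2 z' hzt e (by simp)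
    · simp_all

theorem exists_kpLt_of_two_le_length {α : M} (hα : α ∈ P.positiveRoots f) {lam : List M}
    (hlam : IsKostantPartition (P.positiveRoots f) lt α lam) (h2 : 2 ≤ lam.length) :
    ∃ mu, IsKostantPartition (P.positiveRoots f) lt α mu ∧ mu.length + 1 = lam.length ∧
      KPlt lt mu lam := by
  lift lam to List (P.positiveRoots f) using hlam.1
  obtain ⟨hsorted, hsum⟩ := (isKostantPartition_map_val_iff hlt).1 hlam
  replace h2 : 2 ≤ lam.length := by simpa using h2
  obtain ⟨x, hx, y, hy, hxy⟩ : ∃ x ∈ lam, ∃ y ∈ lam, (x : M) + y ∈ P.positiveRoots f := by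
    by_contra! h
    have hαlam := mem_of_forall_mem_of_sum_eq (T := {z | z ∈ lam})
      (fun a b c hc ha hb => absurd (hc ▸ c.2) (h a ha b hb)) (fun z hz => hz)
      (by rintro rfl; simp at h2) (c := ⟨α, hα⟩) hsum
    exact coe_ne_sum_of_mem h2 hαlam hsum.symm
  obtain ⟨x, hx, y, hy, hxy, hyx⟩ :
      ∃ x ∈ lam, ∃ y ∈ lam, ∃ _ : (x : M) + y ∈ P.positiveRoots f, y < x := by
    rcases (ne_of_add_mem_positiveRoots hxy).lt_or_gt with h | h
    · exact ⟨y, hy, x, hx, add_comm (x : M) y ▸ hxy, h⟩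
    · exact ⟨x, hx, y, hy, hxy, h⟩
  obtain ⟨hyσ, hσx⟩ := hconv y x ⟨x + y, hxy⟩ (add_comm _ _) hyx
  obtain ⟨m, hm, hperm, hmlam⟩ := hsorted.exists_kpLt_of_merge hx hy hσx hyσ
  refine ⟨m.map Subtype.val, (isKostantPartition_map_val_iff hlt).2 ⟨hm, ?_⟩, ?_,
    hmlam.map _ fun a b h => (hlt a b).2 h⟩
  · have := (hperm.map Subtype.val).sum_eq
    simp only [List.map_cons, List.sum_cons, add_assoc] at this
    rw [← hsum]
    exact (add_left_cancel (add_left_cancel this)).symm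
  · simpa using hperm.length_eq.symm

end RootPairing

open RootPairing

theorem stmt3_general {ι M N : Type*} [AddCommGroup M] [Module ℝ M] [AddCommGroup N] [Module ℝ N]
    [Finite ι] (P : RootPairing ι ℝ M N)
    (hcrys : P.IsCrystallographic) (hred : P.IsReduced)
    (Rplus : Set M)
    (hpos : ∃ f : M →ₗ[ℝ] ℝ, Rplus = {x | x ∈ Set.range P.root ∧ 0 < f x})
    (lt : M → M → Prop)
    (htrans : ∀ a b c, a ∈ Rplus → b ∈ Rplus → c ∈ Rplus → lt a b → lt b c → lt a c)
    (hirrefl : ∀ a ∈ Rplus, ¬ lt a a)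
    (htrich : ∀ a b, a ∈ Rplus → b ∈ Rplus → lt a b ∨ a = b ∨ lt b a)
    (hconvex : ∀ β γ, β ∈ Rplus → γ ∈ Rplus → β + γ ∈ Rplus → lt β γ →
      lt β (β + γ) ∧ lt (β + γ) γ)
    (α : M) (hα : α ∈ Rplus)
    (lam : List M) (hlam : IsKostantPartition Rplus lt α lam)
    (hgt : KPlt lt [α] lam)
    (hmin : ∀ mu : List M, IsKostantPartition Rplus lt α mu → KPlt lt [α] mu →
      ¬ KPlt lt mu lam) :
    ∃ β γ : M, lam = [β, γ] ∧ β ∈ Rplus ∧ γ ∈ Rplus ∧ β + γ = α ∧ lt α β ∧ lt γ α := by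
  classical
  obtain ⟨f, rfl⟩ := hpos
  have : IsStrictTotalOrder (P.positiveRoots f) (fun a b => lt a b) :=
    { trichotomous := fun a b h₁ h₂ =>
        Subtype.ext (((htrich a b a.2 b.2).resolve_left h₁).resolve_right h₂)
      irrefl := fun a => hirrefl a a.2
      trans := fun a b c => htrans a b c a.2 b.2 c.2 }
  let _ : LinearOrder (P.positiveRoots f) := linearOrderOfSTO (fun a b => lt a b)
  have hconv : IsConvexOrder (P.positiveRoots f) := by
    rintro a b ⟨c, hc⟩ rfl hab
    exact hconvex a b a.2 b.2 hc hab
  obtain ⟨⟨β, hβ, hαβ⟩, ⟨γ, hγ, hγα⟩⟩ := kpLt_singleton_iff.1 hgt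
  have h2 : 2 ≤ lam.length := by
    rcases lam with _ | ⟨u, _ | ⟨v, t⟩⟩
    · simp at hβ
    · obtain ⟨rfl, rfl⟩ : u = β ∧ u = α := ⟨by simpa using hβ, by simpa using hlam.2.2⟩
      exact absurd hαβ (hirrefl u hα)
    · simp
  have hlen : lam.length = 2 := by
    by_contra h3
    obtain ⟨mu, hmu, hmulen, hmulam⟩ :=
      exists_kpLt_of_two_le_length hconv (fun _ _ => Iff.rfl) hα hlam h2
    exact hmin mu hmu
      (kpLt_singleton_of_two_le_length hconv (fun _ _ => Iff.rfl) hα hmu (by omega)) hmulam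
  obtain ⟨β, γ, rfl⟩ := List.length_eq_two.1 hlen
  obtain ⟨rfl, rfl⟩ : β = _ ∧ γ = _ := ⟨by simpa using hβ, by simpa using hγ⟩
  exact ⟨_, _, rfl, hlam.1 _ (by simp), hlam.1 _ (by simp), by simpa using hlam.2.2, hαβ, hγα⟩

/-- Let `≺` be a convex ordering on a positive system of a finite, reduced,
crystallographic root system and `α` a positive root.  If `lam ∈ KP(α)` is minimal among
the Kostant partitions of `α` strictly greater than the one-part partition `(α)`, then
`lam` has exactly two parts:  `lam = (β, γ)` with `β + γ = α` and `β ≻ α ≻ γ`. -/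
theorem stmt3 {ι M N : Type*} [AddCommGroup M] [Module ℝ M] [AddCommGroup N] [Module ℝ N]
    [Finite ι] (P : RootPairing ι ℝ M N) [P.IsRootSystem]
    (hcrys : P.IsCrystallographic) (hred : P.IsReduced)
    (Rplus : Set M)
    (hpos : ∃ f : M →ₗ[ℝ] ℝ, Rplus = {x | x ∈ Set.range P.root ∧ 0 < f x})
    (lt : M → M → Prop)
    (htrans : ∀ a b c, a ∈ Rplus → b ∈ Rplus → c ∈ Rplus → lt a b → lt b c → lt a c)
    (hirrefl : ∀ a ∈ Rplus, ¬ lt a a)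
    (htrich : ∀ a b, a ∈ Rplus → b ∈ Rplus → lt a b ∨ a = b ∨ lt b a)
    (hconvex : ∀ β γ, β ∈ Rplus → γ ∈ Rplus → β + γ ∈ Rplus → lt β γ →
      lt β (β + γ) ∧ lt (β + γ) γ)
    (α : M) (hα : α ∈ Rplus)
    (lam : List M) (hlam : IsKostantPartition Rplus lt α lam)
    (hgt : KPlt lt [α] lam)
    (hmin : ∀ mu : List M, IsKostantPartition Rplus lt α mu → KPlt lt [α] mu →
      ¬ KPlt lt mu lam) :
    ∃ β γ : M, lam = [β, γ] ∧ β ∈ Rplus ∧ γ ∈ Rplus ∧ β + γ = α ∧ lt α β ∧ lt γ α :=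
  stmt3_general P hcrys hred Rplus hpos lt htrans hirrefl htrich hconvex α hα lam hlam hgt hmin
end

section
/- Let ≺ be a convex ordering on a positive system R⁺ of a finite, reduced, crystallographic root system R, and let α ∈ R⁺ be non-simple, i.e., α = β + γ for some β, γ ∈ R⁺. Then α admits a minimal pair: there exist positive roots β, γ ∈ R⁺ with β + γ = α and β ≻ α ≻ γ such that there is no pair (β′, γ′) of positive roots with β′ + γ′ = α and β ≻ β′ ≻ α ≻ γ′ ≻ γ. -/
/-!
Among the positive roots `β ≻ α` for which `α - β` is again a positive root, take a `≺`-minimal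
one; there are finitely many, and there is at least one because, by convexity, every decomposition
`α = β + γ` with `β ≠ γ` has `α` strictly between its two summands. Reducedness rules out `β = γ`,
since `2β` is never a root. Minimality of `β` is then exactly the minimal-pair condition.
-/

theorem Set.Finite.exists_forall_not_rel {α : Type*} {r : α → α → Prop} {s : Set α}
    (hs : s.Finite) (hne : s.Nonempty)
    (htrans : ∀ a ∈ s, ∀ b ∈ s, ∀ c ∈ s, r a b → r b c → r a c)
    (hirrefl : ∀ a ∈ s, ¬ r a a) :
    ∃ a ∈ s, ∀ b ∈ s, ¬ r b a := by
  let r' : s → s → Prop := fun a b => r a b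
  have : IsTrans s r' := ⟨fun a b c => htrans a a.2 b b.2 c c.2⟩
  have : Std.Irrefl r' := ⟨fun a => hirrefl a a.2⟩
  have := hs.to_subtype
  obtain ⟨⟨a, ha⟩, -, hmin⟩ :=
    (Finite.wellFounded_of_trans_of_irrefl r').has_min Set.univ ⟨⟨_, hne.some_mem⟩, trivial⟩
  exact ⟨a, ha, fun b hb => hmin ⟨b, hb⟩ trivial⟩

theorem RootPairing.root_add_self_notMem_range_root {ι M N : Type*} [AddCommGroup M] [Module ℝ M]
    [AddCommGroup N] [Module ℝ N] (P : RootPairing ι ℝ M N) [P.IsReduced] (i : ι) :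
    P.root i + P.root i ∉ Set.range P.root := by
  have := IsAddTorsionFree.of_isTorsionFree ℝ M
  simpa [two_nsmul] using P.nsmul_notMem_range_root (n := 2) (i := i)

theorem lt_and_lt_or_lt_and_lt_of_convex {M : Type*} [AddCommMagma M] {Rplus : Set M} {lt : M → M → Prop}
    (htrich : ∀ a b, a ∈ Rplus → b ∈ Rplus → lt a b ∨ a = b ∨ lt b a)
    (hconvex : ∀ β γ, β ∈ Rplus → γ ∈ Rplus → β + γ ∈ Rplus → lt β γ →
      lt β (β + γ) ∧ lt (β + γ) γ)
    {α β γ : M} (hβ : β ∈ Rplus) (hγ : γ ∈ Rplus) (hα : α ∈ Rplus) (hsum : β + γ = α)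
    (hne : β ≠ γ) :
    (lt α β ∧ lt γ α) ∨ (lt α γ ∧ lt β α) := by
  subst hsum
  rcases htrich β γ hβ hγ with hlt | heq | hgt
  · exact Or.inr (hconvex β γ hβ hγ hα hlt).symm
  · exact absurd heq hne
  · rw [add_comm] at hα ⊢
    exact Or.inl (hconvex γ β hγ hβ hα hgt).symm

theorem stmt4_general {ι M N : Type*} [AddCommGroup M] [Module ℝ M] [AddCommGroup N] [Module ℝ N]
    [Finite ι] (P : RootPairing ι ℝ M N)
    (hred : P.IsReduced)
    (Rplus : Set M)
    (hpos : ∃ f : M →ₗ[ℝ] ℝ, Rplus = {x | x ∈ Set.range P.root ∧ 0 < f x})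
    (lt : M → M → Prop)
    (htrans : ∀ a b c, a ∈ Rplus → b ∈ Rplus → c ∈ Rplus → lt a b → lt b c → lt a c)
    (hirrefl : ∀ a ∈ Rplus, ¬ lt a a)
    (htrich : ∀ a b, a ∈ Rplus → b ∈ Rplus → lt a b ∨ a = b ∨ lt b a)
    (hconvex : ∀ β γ, β ∈ Rplus → γ ∈ Rplus → β + γ ∈ Rplus → lt β γ →
      lt β (β + γ) ∧ lt (β + γ) γ)
    (α : M) (hα : α ∈ Rplus)
    (hnonsimple : ∃ β γ : M, β ∈ Rplus ∧ γ ∈ Rplus ∧ β + γ = α) :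
    ∃ β γ : M, β ∈ Rplus ∧ γ ∈ Rplus ∧ β + γ = α ∧ lt α β ∧ lt γ α ∧
      ¬ ∃ β' γ' : M, β' ∈ Rplus ∧ γ' ∈ Rplus ∧ β' + γ' = α ∧
          lt β' β ∧ lt α β' ∧ lt γ' α ∧ lt γ γ' := by
  obtain ⟨f, hf⟩ := hpos
  have hroot : Rplus ⊆ Set.range P.root := hf ▸ fun _ hx => hx.1
  have hsplit : ∀ β γ, β ∈ Rplus → γ ∈ Rplus → β + γ = α →
      (lt α β ∧ lt γ α) ∨ (lt α γ ∧ lt β α) := by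
    rintro β γ hβ hγ hsum
    refine lt_and_lt_or_lt_and_lt_of_convex htrich hconvex hβ hγ hα hsum ?_
    rintro rfl
    obtain ⟨i, rfl⟩ := hroot hβ
    exact P.root_add_self_notMem_range_root i (hsum ▸ hroot hα)
  set T : Set M := {β | β ∈ Rplus ∧ lt α β ∧ α - β ∈ Rplus}
  have hTfin : T.Finite := (Set.finite_range P.root).subset fun _ hx => hroot hx.1
  have hTne : T.Nonempty := by
    obtain ⟨β, γ, hβ, hγ, rfl⟩ := hnonsimple
    rcases hsplit β γ hβ hγ rfl with ⟨hαβ, -⟩ | ⟨hαγ, -⟩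
    · exact ⟨β, hβ, hαβ, by rwa [add_sub_cancel_left]⟩
    · exact ⟨γ, hγ, hαγ, by rwa [add_sub_cancel_right]⟩
  obtain ⟨β, ⟨hβ, hαβ, hγ⟩, hmin⟩ := hTfin.exists_forall_not_rel hTne
    (fun a ha b hb c hc => htrans a b c ha.1 hb.1 hc.1) (fun a ha => hirrefl a ha.1)
  have hγα : lt (α - β) α := by
    rcases hsplit β (α - β) hβ hγ (add_sub_cancel β α) with ⟨-, h⟩ | ⟨-, hβα⟩
    · exact h
    · exact absurd (htrans α β α hα hβ hα hαβ hβα) (hirrefl α hα)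
  refine ⟨β, α - β, hβ, hγ, add_sub_cancel β α, hαβ, hγα, ?_⟩
  rintro ⟨β', γ', hβ', hγ', rfl, hβ'β, hαβ', -, -⟩
  exact hmin β' ⟨hβ', hαβ', by rwa [add_sub_cancel_left]⟩ hβ'β

/-- Let `≺` be a convex ordering on a positive system of a finite, reduced,
crystallographic root system, and let `α` be a non-simple positive root (i.e. `α = β + γ`
for some positive roots `β, γ`).  Then `α` admits a minimal pair: positive roots `β, γ`
with `β + γ = α` and `β ≻ α ≻ γ` such that there is no pair `(β', γ')` of positive roots
with `β' + γ' = α` and `β ≻ β' ≻ α ≻ γ' ≻ γ`. -/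
theorem stmt4 {ι M N : Type*} [AddCommGroup M] [Module ℝ M] [AddCommGroup N] [Module ℝ N]
    [Finite ι] (P : RootPairing ι ℝ M N) [P.IsRootSystem]
    (hcrys : P.IsCrystallographic) (hred : P.IsReduced)
    (Rplus : Set M)
    (hpos : ∃ f : M →ₗ[ℝ] ℝ, Rplus = {x | x ∈ Set.range P.root ∧ 0 < f x})
    (lt : M → M → Prop)
    (htrans : ∀ a b c, a ∈ Rplus → b ∈ Rplus → c ∈ Rplus → lt a b → lt b c → lt a c)
    (hirrefl : ∀ a ∈ Rplus, ¬ lt a a)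
    (htrich : ∀ a b, a ∈ Rplus → b ∈ Rplus → lt a b ∨ a = b ∨ lt b a)
    (hconvex : ∀ β γ, β ∈ Rplus → γ ∈ Rplus → β + γ ∈ Rplus → lt β γ →
      lt β (β + γ) ∧ lt (β + γ) γ)
    (α : M) (hα : α ∈ Rplus)
    (hnonsimple : ∃ β γ : M, β ∈ Rplus ∧ γ ∈ Rplus ∧ β + γ = α) :
    ∃ β γ : M, β ∈ Rplus ∧ γ ∈ Rplus ∧ β + γ = α ∧ lt α β ∧ lt γ α ∧
      ¬ ∃ β' γ' : M, β' ∈ Rplus ∧ γ' ∈ Rplus ∧ β' + γ' = α ∧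
          lt β' β ∧ lt α β' ∧ lt γ' α ∧ lt γ γ' :=
  stmt4_general P hred Rplus hpos lt htrans hirrefl htrich hconvex α hα hnonsimple
end

section
/- Let R be a finite, reduced, crystallographic, irreducible root system with a Weyl-invariant positive-definite symmetric bilinear form normalized so that short roots have squared length 2, and let R⁺ be a positive system. For any α, β, γ ∈ R⁺ with β + γ = α, the following two identities hold: d_α · (p_{β,γ} − β·γ) = d_β · d_γ · (p_{β,γ} + 1) in ℤ, and [d_α] · [p_{β,γ} − β·γ] = [d_β] · [d_γ] · [p_{β,γ} + 1] in the Laurent polynomial ring ℤ[q, q⁻¹]. -/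
/-!
An irreducible reduced crystallographic root system has at most two root lengths, with ratio `2`
or `3`, so `d_α, d_β, d_γ ∈ {1, m}` for one `m ∈ {2, 3}`. Together with `d_α = d_β + d_γ + β·γ`,
`β·γ = ⟨β, γ∨⟩ d_γ`, the bound `p ≥ ⟨β, γ∨⟩ + 1` (because `s_γ α = β - (⟨β, γ∨⟩ + 1) γ` is a root)
and `d_{β - pγ} ∈ {1, m}`, this leaves finitely many cases, in each of which the multisets
`{d_α, p - β·γ, 1}` and `{d_β, d_γ, p + 1}` coincide. As `[1] = 1`, both identities follow.
-/

open LaurentPolynomial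

/-- The quantum integer `[n] = (qⁿ - q⁻ⁿ)/(q - q⁻¹)` as a Laurent polynomial in `q = T`:
for `n ≥ 0` it is `qⁿ⁻¹ + qⁿ⁻³ + ⋯ + q¹⁻ⁿ`, and `[-n] = -[n]`. -/
noncomputable def qint (n : ℤ) : LaurentPolynomial ℤ :=
  if 0 ≤ n then ∑ k ∈ Finset.range n.toNat, T (n - 1 - 2 * (k : ℤ))
  else -∑ k ∈ Finset.range (-n).toNat, T (-n - 1 - 2 * (k : ℤ))

@[simp]
lemma qint_one : qint 1 = 1 := by
  simp [qint]

namespace LinearMap.IsSymm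

variable {R M : Type*} [CommRing R] [AddCommGroup M] [Module R M] {B : M →ₗ[R] M →ₗ[R] R}

lemma apply_add_self (hB : B.IsSymm) (x y : M) :
    B (x + y) (x + y) = B x x + 2 * B x y + B y y := by
  have := hB.eq y x
  simp only [map_add, add_apply, RingHom.id_apply] at this ⊢
  rw [this]
  ring

lemma apply_sub_zsmul_self (hB : B.IsSymm) (x y : M) (n : ℤ) :
    B (x - n • y) (x - n • y) = B x x - 2 * n * B x y + n ^ 2 * B y y := by
  have := hB.eq y x
  simp only [map_sub, map_zsmul, sub_apply, LinearMap.smul_apply, RingHom.id_apply,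
    zsmul_eq_mul] at this ⊢
  rw [this]
  ring

end LinearMap.IsSymm

open Set

namespace RootPairing

variable {ι R M N : Type*} [AddCommGroup M] [AddCommGroup N]

lemma root_sub_zsmul_mem_range_of_root_eq_add [CommRing R] [Module R M] [Module R N]
    {P : RootPairing ι R M N} [P.IsCrystallographic] {i j k : ι}
    (h : P.root k = P.root i + P.root j) :
    P.root i - (P.pairingIn ℤ i j + 1) • P.root j ∈ range P.root := by
  refine ⟨P.reflectionPerm j k, ?_⟩
  rw [root_reflectionPerm, reflection_apply_root, pairing_eq_add_of_root_eq_add h, pairing_same,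
    ← P.algebraMap_pairingIn ℤ, h, add_smul, ← Int.cast_smul_eq_zsmul R]
  simp only [eq_intCast, Int.cast_add, Int.cast_one]
  module

lemma isIrreducible_of_forall_exists_form_ne_zero {K : Type*} [Field K] [NeZero (2 : K)]
    [Module K M] [Module K N] {P : RootPairing ι K M N} [P.IsRootSystem] [Nonempty ι]
    (B : P.InvariantForm)
    (h : ∀ s : Set ι, s.Nonempty → sᶜ.Nonempty →
      ∃ i ∈ s, ∃ j ∈ sᶜ, B.form (P.root i) (P.root j) ≠ 0) :
    P.IsIrreducible := by
  have : Nontrivial M := nontrivial_of_ne _ _ (P.ne_zero (Classical.arbitrary ι))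
  refine IsIrreducible.mk' P fun q hq hq_ne => ?_
  let q' : P.invtRootSubmodule := ⟨q, P.mem_invtRootSubmodule_iff.mpr hq⟩
  have hs : {i | P.root i ∈ q}.Nonempty := by
    by_contra! hs
    refine hq_ne (congrArg Subtype.val ((invtRootSubmodule.eq_bot_iff q').mpr fun i hi => ?_))
    exact hs.subset hi
  by_contra hq_top
  have hsc : {i | P.root i ∈ q}ᶜ.Nonempty := by
    by_contra! hsc
    refine hq_top (congrArg Subtype.val ((invtRootSubmodule.eq_top_iff q').mpr ?_))
    rintro - ⟨i, rfl⟩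
    by_contra hi
    exact hsc.subset hi
  obtain ⟨i, hi, j, hj, hij⟩ := h _ hs hsc
  have : P.pairing i j = 0 := invtRootSubmodule.le_ker_coroot' q' hj hi
  exact hij ((B.apply_root_root_zero_iff i j).mpr this)

lemma InvariantForm.exists_forall_apply_root_eq_or_eq_mul [Finite ι] [Field R] [LinearOrder R]
    [IsStrictOrderedRing R] [Module R M] [Module R N] {P : RootPairing ι R M N}
    [P.IsCrystallographic] [P.IsReduced] [P.IsIrreducible] (B : P.InvariantForm) (i : ι)
    (hi : 0 < B.form (P.root i) (P.root i))
    (hmin : ∀ k, B.form (P.root i) (P.root i) ≤ B.form (P.root k) (P.root k)) :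
    ∃ m : ℤ, (m = 2 ∨ m = 3) ∧ ∀ k, B.form (P.root k) (P.root k) = B.form (P.root i) (P.root i) ∨
      B.form (P.root k) (P.root k) = m * B.form (P.root i) (P.root i) := by
  by_cases! h : ∀ k, B.form (P.root k) (P.root k) = B.form (P.root i) (P.root i)
  · exact ⟨2, Or.inl rfl, fun k => Or.inl (h k)⟩
  obtain ⟨j, hj⟩ := h
  obtain ⟨m, hm, hjm⟩ : ∃ m : ℤ, (m = 2 ∨ m = 3) ∧
      B.form (P.root j) (P.root j) = m * B.form (P.root i) (P.root i) := by
    have := hmin j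
    rcases B.apply_eq_or j i with h | h | h | h | h
    · exact absurd h hj
    · exact ⟨2, Or.inl rfl, by rw [h]; norm_num⟩
    · exact ⟨3, Or.inr rfl, by rw [h]; norm_num⟩
    all_goals linarith
  exact ⟨m, hm, fun k => hjm ▸ B.apply_eq_or_of_apply_ne hj.symm k⟩

end RootPairing

lemma multiset_eq_of_root_lengths {m dA dB dG bg c p : ℤ} (hm : m = 2 ∨ m = 3)
    (hA : dA = 1 ∨ dA = m) (hB : dB = 1 ∨ dB = m) (hG : dG = 1 ∨ dG = m)
    (hsum : dA = dB + dG + bg) (hc : bg = c * dG) (hp : 0 ≤ p) (hcp : c + 1 ≤ p)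
    (hlen : dB - p * bg + p ^ 2 * dG = 1 ∨ dB - p * bg + p ^ 2 * dG = m) :
    ({dA, p - bg, 1} : Multiset ℤ) = {dB, dG, p + 1} := by
  obtain rfl : bg = dA - dB - dG := by omega
  have hdB : 1 ≤ dB := by omega
  have hdG : 1 ≤ dG := by omega
  have hbg : dA - dB - dG ≤ 1 := by omega
  have hp2 : p ≤ 2 := by
    have : dB - p * (dA - dB - dG) + p ^ 2 * dG ≤ 3 := by omega
    nlinarith [mul_nonneg (pow_two_nonneg p) (sub_nonneg.2 hdG), mul_nonneg hp (sub_nonneg.2 hbg)]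
  interval_cases p <;> rcases hm with rfl | rfl <;> rcases hA with rfl | rfl <;>
    rcases hB with rfl | rfl <;> rcases hG with rfl | rfl <;> first | omega | decide

lemma mul_eq_mul_mul_of_multiset_eq {R : Type*} [CommMonoid R] (f : ℤ → R) (hf : f 1 = 1)
    {a b c d e : ℤ} (h : ({a, b, 1} : Multiset ℤ) = {c, d, e}) :
    f a * f b = f c * f d * f e := by
  simpa [hf, mul_assoc] using congrArg (fun s => (s.map f).prod) h

open RootPairing

theorem stmt5_general {ι M N : Type*} [AddCommGroup M] [Module ℝ M] [AddCommGroup N] [Module ℝ N]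
    [Finite ι] (P : RootPairing ι ℝ M N) [P.IsRootSystem]
    (hcrys : P.IsCrystallographic) (hred : P.IsReduced)
    (B : M →ₗ[ℝ] M →ₗ[ℝ] ℝ)
    (hBsymm : ∀ x y : M, B x y = B y x)
    (hBinv : ∀ (i : ι) (x y : M), B (P.reflection i x) (P.reflection i y) = B x y)
    (hnorm : ∀ i : ι, 2 ≤ B (P.root i) (P.root i))
    (hshort : ∃ i : ι, B (P.root i) (P.root i) = 2)
    (hirred : ∀ s : Set ι, s.Nonempty → sᶜ.Nonempty →
      ∃ i ∈ s, ∃ j ∈ sᶜ, B (P.root i) (P.root j) ≠ 0)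
    (Rplus : Set M)
    (hpos : ∃ f : M →ₗ[ℝ] ℝ, Rplus = {x | x ∈ Set.range P.root ∧ 0 < f x})
    (α β γ : M) (hα : α ∈ Rplus) (hβ : β ∈ Rplus) (hγ : γ ∈ Rplus) (hsum : β + γ = α)
    (p : ℤ) (hp : β - p • γ ∈ Set.range P.root)
    (hpmax : ∀ q : ℤ, β - q • γ ∈ Set.range P.root → q ≤ p)
    (dA dB dG bg : ℤ)
    (hdA : (dA : ℝ) = B α α / 2) (hdB : (dB : ℝ) = B β β / 2)
    (hdG : (dG : ℝ) = B γ γ / 2) (hbg : (bg : ℝ) = B β γ) :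
    dA * (p - bg) = dB * dG * (p + 1) ∧
      qint dA * qint (p - bg) = qint dB * qint dG * qint (p + 1) := by
  obtain ⟨f, rfl⟩ := hpos
  obtain ⟨⟨iα, rfl⟩, -⟩ := hα
  obtain ⟨⟨iβ, rfl⟩, -⟩ := hβ
  obtain ⟨⟨iγ, rfl⟩, -⟩ := hγ
  obtain ⟨iδ, hδ⟩ := hp
  obtain ⟨i₀, hi₀⟩ := hshort
  have hB : B.IsSymm := ⟨hBsymm⟩
  let Bf : P.InvariantForm := ⟨B, hB, fun i => (by linarith [hnorm i] : (0 : ℝ) < _).ne', hBinv⟩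
  have : Nonempty ι := ⟨i₀⟩
  have : P.IsIrreducible := isIrreducible_of_forall_exists_form_ne_zero Bf hirred
  obtain ⟨m, hm, hlen⟩ := Bf.exists_forall_apply_root_eq_or_eq_mul i₀ (by simp [Bf, hi₀])
    fun k => by simpa [Bf, hi₀] using hnorm k
  have hd (d : ℤ) (k : ι) (hk : (d : ℝ) = B (P.root k) (P.root k) / 2) : d = 1 ∨ d = m := by
    rcases hlen k with h | h <;> [left; right] <;> exact_mod_cast (by simp_all [Bf])
  have hsumZ : dA = dB + dG + bg := by
    have := hB.apply_add_self (P.root iβ) (P.root iγ)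
    rw [hsum] at this
    exact_mod_cast (by linarith : (dA : ℝ) = dB + dG + bg)
  have hbgZ : bg = P.pairingIn ℤ iβ iγ * dG := by
    have := Bf.two_mul_apply_root_root iβ iγ
    rw [← P.algebraMap_pairingIn ℤ, eq_intCast] at this
    exact_mod_cast (by rw [hbg, hdG]; linarith : (bg : ℝ) = P.pairingIn ℤ iβ iγ * dG)
  have hdδ : ((dB - p * bg + p ^ 2 * dG : ℤ) : ℝ) = B (P.root iδ) (P.root iδ) / 2 := by
    rw [hδ, hB.apply_sub_zsmul_self]
    push_cast
    rw [hdB, hdG, hbg]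
    ring
  have key := multiset_eq_of_root_lengths hm (hd dA iα hdA) (hd dB iβ hdB) (hd dG iγ hdG) hsumZ
    hbgZ (hpmax 0 (by simp)) (hpmax _ (root_sub_zsmul_mem_range_of_root_eq_add hsum.symm))
    (hd _ iδ hdδ)
  exact ⟨mul_eq_mul_mul_of_multiset_eq id rfl key, mul_eq_mul_mul_of_multiset_eq qint qint_one key⟩

/-- Let `R` be a finite, reduced, crystallographic, irreducible root system
with a Weyl-invariant positive definite symmetric bilinear form `B`, normalized so that
short roots have squared length `2`, and let `Rplus` be a positive system.  For positive
roots `α, β, γ` with `β + γ = α`, writing `d_α = α·α/2` etc., `p = p_{β,γ}` (the largest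
`p` with `β - pγ` a root) and `bg = β·γ`, one has
`d_α (p - β·γ) = d_β d_γ (p + 1)` in `ℤ` and
`[d_α][p - β·γ] = [d_β][d_γ][p + 1]` in `ℤ[q,q⁻¹]`. -/
theorem stmt5 {ι M N : Type*} [AddCommGroup M] [Module ℝ M] [AddCommGroup N] [Module ℝ N]
    [Finite ι] (P : RootPairing ι ℝ M N) [P.IsRootSystem]
    (hcrys : P.IsCrystallographic) (hred : P.IsReduced)
    (B : M →ₗ[ℝ] M →ₗ[ℝ] ℝ)
    (hBsymm : ∀ x y : M, B x y = B y x)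
    (hBpos : ∀ x : M, x ≠ 0 → 0 < B x x)
    (hBinv : ∀ (i : ι) (x y : M), B (P.reflection i x) (P.reflection i y) = B x y)
    (hnorm : ∀ i : ι, 2 ≤ B (P.root i) (P.root i))
    (hshort : ∃ i : ι, B (P.root i) (P.root i) = 2)
    (hirred : ∀ s : Set ι, s.Nonempty → sᶜ.Nonempty →
      ∃ i ∈ s, ∃ j ∈ sᶜ, B (P.root i) (P.root j) ≠ 0)
    (Rplus : Set M)
    (hpos : ∃ f : M →ₗ[ℝ] ℝ, Rplus = {x | x ∈ Set.range P.root ∧ 0 < f x})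
    (α β γ : M) (hα : α ∈ Rplus) (hβ : β ∈ Rplus) (hγ : γ ∈ Rplus) (hsum : β + γ = α)
    (p : ℤ) (hp : β - p • γ ∈ Set.range P.root)
    (hpmax : ∀ q : ℤ, β - q • γ ∈ Set.range P.root → q ≤ p)
    (dA dB dG bg : ℤ)
    (hdA : (dA : ℝ) = B α α / 2) (hdB : (dB : ℝ) = B β β / 2)
    (hdG : (dG : ℝ) = B γ γ / 2) (hbg : (bg : ℝ) = B β γ) :
    dA * (p - bg) = dB * dG * (p + 1) ∧
      qint dA * qint (p - bg) = qint dB * qint dG * qint (p + 1) :=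
  stmt5_general P hcrys hred B hBsymm hBinv hnorm hshort hirred Rplus hpos α β γ hα hβ hγ hsum p hp
    hpmax dA dB dG bg hdA hdB hdG hbg
end

section
/- Let R be a finite, reduced, crystallographic, irreducible root system with a Weyl-invariant positive-definite symmetric bilinear form normalized so that short roots have squared length 2, and let R⁺ be a positive system. Suppose α, β, γ ∈ R⁺ with β + γ = α. Then: p_{β,γ} = 2 if d_α = 3 and d_β = d_γ = 1; p_{β,γ} = 1 if d_α = 2 and d_β = d_γ = 1; p_{β,γ} = 1 if d_α = d_β = d_γ = 1 and R contains a root δ with d_δ = 3 (i.e., R is of type G₂); and p_{β,γ} = 0 in all other cases. Moreover, in the last case one has d_α = min(d_β, d_γ). -/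
/-!
Since `β + γ` is a root, `β` and `γ` are linearly independent and `p` is the bottom coefficient `q`
of the `γ`-string `β - qγ, …, β + rγ` through `β`; chain theory gives `q - r = ⟨β, γ^∨⟩`, `1 ≤ r`
and `q + r ≤ 3`. Comparing lengths of non-orthogonal roots along paths in the (connected)
non-orthogonality graph shows that all squared lengths are `2` or `2w`, where `w = 3` exactly in
type `G₂` and `w = 2` otherwise. The integrality relations `⟨β, γ^∨⟩ d_γ = ⟨γ, β^∨⟩ d_β =
d_α - d_β - d_γ` and the length `2 d_β + 2 d_γ - d_α` of `β - γ` (a root iff `q ≥ 1`) then leave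
only one case undecided: `α, β, γ` short in `G₂`. There a long root `δ` with `δ·γ = 3` must equal
`β + 2γ` or `γ - β`, and either way `β - γ` is a root.
-/

open Set

theorem Relation.reflTransGen_of_exists_rel_mem_compl {α : Type*} {r : α → α → Prop}
    (h : ∀ s : Set α, s.Nonempty → sᶜ.Nonempty → ∃ i ∈ s, ∃ j ∈ sᶜ, r i j) (a b : α) :
    ReflTransGen r a b := by
  by_contra hab
  obtain ⟨i, hi, j, hj, hij⟩ := h {c | ReflTransGen r a c} ⟨a, .refl⟩ ⟨b, hab⟩
  exact hj (hi.tail hij)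

/-- The `d`'s are the half squared lengths of `α = β + γ`, `β`, `γ`; `n = ⟨β, γ^∨⟩`,
`m = ⟨γ, β^∨⟩`; `q` and `r` are the bottom and top coefficients of the `γ`-string through `β`. -/
lemma root_string_case_analysis {w dA dB dG n m q r : ℤ} (hw : w = 2 ∨ w = 3)
    (hA : dA = 1 ∨ dA = w) (hB : dB = 1 ∨ dB = w) (hG : dG = 1 ∨ dG = w)
    (hn : n * dG = dA - dB - dG) (hm : m * dB = dA - dB - dG)
    (hqr : q - r = n) (hq : 0 ≤ q) (hr : 1 ≤ r) (h3 : q + r ≤ 3)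
    (hsub : 1 ≤ q → 2 * dB + 2 * dG - dA = 1 ∨ 2 * dB + 2 * dG - dA = w)
    (hG2 : w = 3 → dA = 1 → dB = 1 → dG = 1 → 1 ≤ q) :
    ((dA = 3 ∧ dB = 1 ∧ dG = 1) → q = 2) ∧
    ((dA = 2 ∧ dB = 1 ∧ dG = 1) → q = 1) ∧
    ((dA = 1 ∧ dB = 1 ∧ dG = 1 ∧ w = 3) → q = 1) ∧
    ((¬ (dA = 3 ∧ dB = 1 ∧ dG = 1) ∧ ¬ (dA = 2 ∧ dB = 1 ∧ dG = 1) ∧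
        ¬ (dA = 1 ∧ dB = 1 ∧ dG = 1 ∧ w = 3)) → q = 0 ∧ dA = min dB dG) := by
  rcases hw with rfl | rfl <;> rcases hA with rfl | rfl <;> rcases hB with rfl | rfl <;>
    rcases hG with rfl | rfl <;> refine ⟨fun h ↦ ?_, fun h ↦ ?_, fun h ↦ ?_, fun h ↦ ?_⟩ <;> omega

namespace RootPairing

variable {ι M N : Type*} [AddCommGroup M] [Module ℝ M] [AddCommGroup N] [Module ℝ N]
  {P : RootPairing ι ℝ M N}

def InvariantForm.ofPosDef (B : M →ₗ[ℝ] M →ₗ[ℝ] ℝ) (hsymm : ∀ x y, B x y = B y x)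
    (hpos : ∀ x, x ≠ 0 → 0 < B x x)
    (hinv : ∀ i x y, B (P.reflection i x) (P.reflection i y) = B x y) : P.InvariantForm where
  form := B
  symm := ⟨hsymm⟩
  ne_zero i := (hpos _ (P.ne_zero i)).ne'
  isOrthogonal_reflection := hinv

namespace InvariantForm

variable (B : P.InvariantForm)

lemma form_comm (x y : M) : B.form x y = B.form y x := B.symm.eq x y

lemma pairingIn_mul_apply_root_self [P.IsCrystallographic] (i j : ι) :
    (P.pairingIn ℤ i j : ℝ) * B.form (P.root j) (P.root j) =
      2 * B.form (P.root i) (P.root j) := by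
  rw [B.two_mul_apply_root_root, ← P.algebraMap_pairingIn ℤ, algebraMap_int_eq, eq_intCast]

lemma apply_root_self_eq_or_of_apply_ne_zero [Finite ι] [P.IsCrystallographic] [P.IsReduced]
    {i j : ι} (h : B.form (P.root i) (P.root j) ≠ 0) :
    B.form (P.root j) (P.root j) = B.form (P.root i) (P.root i) ∨
    B.form (P.root j) (P.root j) = 2 * B.form (P.root i) (P.root i) ∨
    B.form (P.root j) (P.root j) = 3 * B.form (P.root i) (P.root i) ∨
    B.form (P.root i) (P.root i) = 2 * B.form (P.root j) (P.root j) ∨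
    B.form (P.root i) (P.root i) = 3 * B.form (P.root j) (P.root j) := by
  by_cases hij : P.root i = P.root j
  · simp [hij]
  by_cases hij' : P.root i = -P.root j
  · simp [hij']
  have hmem := P.pairingIn_pairingIn_mem_set_of_isCrystal_of_isRed' i j hij hij'
  have hswap : (P.pairingIn ℤ j i : ℝ) * B.form (P.root i) (P.root i) =
      P.pairingIn ℤ i j * B.form (P.root j) (P.root j) := by
    simpa [← P.algebraMap_pairingIn ℤ] using B.pairing_mul_eq_pairing_mul_swap i j
  have hne : (P.pairingIn ℤ i j : ℝ) ≠ 0 := by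
    intro h0
    have := B.pairingIn_mul_apply_root_self i j
    rw [h0, zero_mul] at this
    exact h (by linarith)
  simp only [mem_insert_iff, mem_singleton_iff, Prod.mk.injEq] at hmem
  rcases hmem with ⟨h1, h2⟩ | ⟨h1, h2⟩ | ⟨h1, h2⟩ | ⟨h1, h2⟩ | ⟨h1, h2⟩ | ⟨h1, h2⟩ |
    ⟨h1, h2⟩ | ⟨h1, h2⟩ | ⟨h1, h2⟩ | ⟨h1, h2⟩ | ⟨h1, h2⟩ <;>
    rw [h1, h2] at hswap <;> norm_num at hne hswap <;> grind

lemma exists_apply_root_self_eq_apply_ne_zero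
    (hirred : ∀ s : Set ι, s.Nonempty → sᶜ.Nonempty →
      ∃ i ∈ s, ∃ j ∈ sᶜ, B.form (P.root i) (P.root j) ≠ 0) (i j : ι) :
    ∃ k, B.form (P.root k) (P.root k) = B.form (P.root i) (P.root i) ∧
      B.form (P.root k) (P.root j) ≠ 0 := by
  induction Relation.reflTransGen_of_exists_rel_mem_compl hirred i j with
  | refl => exact ⟨i, rfl, B.ne_zero i⟩
  | @tail b c _ hbc ih =>
    obtain ⟨k, hk, hkb⟩ := ih
    -- reflecting in `b` keeps the length of `k` and makes it non-orthogonal to `c`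
    by_cases hkc : B.form (P.root k) (P.root c) = 0
    swap
    · exact ⟨k, hk, hkc⟩
    refine ⟨P.reflectionPerm b k, by rw [root_reflectionPerm, apply_reflection_reflection, hk], ?_⟩
    have hcb : P.pairing c b ≠ 0 := by
      rwa [ne_eq, ← B.apply_root_root_zero_iff, B.form_comm]
    rw [← B.apply_reflection_reflection b, root_reflectionPerm, reflection_same,
      reflection_apply_root, map_sub, map_smul, hkc, smul_eq_mul, zero_sub, neg_ne_zero]
    exact mul_ne_zero hcb hkb

lemma eq_of_form_apply_eq (hpos : ∀ x, x ≠ 0 → 0 < B.form x x) {x y : M}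
    (hx : B.form x x = B.form x y) (hy : B.form y y = B.form x y) :
    x = y := by
  by_contra hne
  have := hpos (x - y) (sub_ne_zero.mpr hne)
  simp only [map_sub, LinearMap.sub_apply, B.form_comm y x] at this
  linarith

variable [Finite ι] [P.IsCrystallographic] [P.IsReduced]

lemma apply_root_root_eq_zero_or_of_apply_self_eq_three_mul {i j : ι}
    (h : B.form (P.root i) (P.root i) = 3 * B.form (P.root j) (P.root j)) :
    B.form (P.root i) (P.root j) = 0 ∨
    2 * B.form (P.root i) (P.root j) = 3 * B.form (P.root j) (P.root j) ∨
    2 * B.form (P.root i) (P.root j) = -3 * B.form (P.root j) (P.root j) := by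
  have hj := B.ne_zero j
  have hij : P.root i ≠ P.root j := fun e ↦ hj (by rw [e] at h; linarith)
  have hij' : P.root i ≠ -P.root j := fun e ↦ hj <| by
    simp only [e, map_neg, LinearMap.neg_apply, neg_neg] at h
    linarith
  have hmem := P.pairingIn_pairingIn_mem_set_of_isCrystal_of_isRed' i j hij hij'
  have e1 := B.pairingIn_mul_apply_root_self i j
  have e2 := B.pairingIn_mul_apply_root_self j i
  rw [h, B.form_comm (P.root j) (P.root i)] at e2
  simp only [mem_insert_iff, mem_singleton_iff, Prod.mk.injEq] at hmem
  rcases hmem with ⟨h1, h2⟩ | ⟨h1, h2⟩ | ⟨h1, h2⟩ | ⟨h1, h2⟩ | ⟨h1, h2⟩ | ⟨h1, h2⟩ |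
    ⟨h1, h2⟩ | ⟨h1, h2⟩ | ⟨h1, h2⟩ | ⟨h1, h2⟩ | ⟨h1, h2⟩ <;>
    rw [h1] at e1 <;> rw [h2] at e2 <;> push_cast at e1 e2 <;>
    first | (left; linarith) | (right; left; linarith) | (right; right; linarith)

section Irreducible

variable (hirred : ∀ s : Set ι, s.Nonempty → sᶜ.Nonempty →
  ∃ i ∈ s, ∃ j ∈ sᶜ, B.form (P.root i) (P.root j) ≠ 0)
include hirred

lemma apply_root_self_eq_two_or_four_or_six (hnorm : ∀ i, 2 ≤ B.form (P.root i) (P.root i))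
    (hshort : ∃ i, B.form (P.root i) (P.root i) = 2) (j : ι) :
    B.form (P.root j) (P.root j) = 2 ∨ B.form (P.root j) (P.root j) = 4 ∨
      B.form (P.root j) (P.root j) = 6 := by
  obtain ⟨i, hi⟩ := hshort
  obtain ⟨k, hk, hkj⟩ := B.exists_apply_root_self_eq_apply_ne_zero hirred i j
  have := hnorm j
  rcases B.apply_root_self_eq_or_of_apply_ne_zero hkj with h | h | h | h | h <;>
    rw [hk, hi] at h <;> norm_num [h] at this ⊢ <;> linarith

lemma apply_root_self_ne_four_of_eq_six {i j : ι} (hi : B.form (P.root i) (P.root i) = 6) :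
    B.form (P.root j) (P.root j) ≠ 4 := by
  intro hj
  obtain ⟨k, hk, hkj⟩ := B.exists_apply_root_self_eq_apply_ne_zero hirred i j
  rcases B.apply_root_self_eq_or_of_apply_ne_zero hkj with h | h | h | h | h <;>
    rw [hk, hi, hj] at h <;> norm_num at h

lemma exists_forall_apply_root_self_eq (hnorm : ∀ i, 2 ≤ B.form (P.root i) (P.root i))
    (hshort : ∃ i, B.form (P.root i) (P.root i) = 2) :
    ∃ w : ℤ, (w = 2 ∨ w = 3) ∧ ((∃ i, B.form (P.root i) (P.root i) = 6) ↔ w = 3) ∧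
      ∀ j, B.form (P.root j) (P.root j) = 2 ∨ B.form (P.root j) (P.root j) = 2 * w := by
  have hlen := B.apply_root_self_eq_two_or_four_or_six hirred hnorm hshort
  by_cases h6 : ∃ i, B.form (P.root i) (P.root i) = 6
  · obtain ⟨i, hi⟩ := h6
    refine ⟨3, by norm_num, ⟨fun _ ↦ rfl, fun _ ↦ ⟨i, hi⟩⟩, fun j ↦ ?_⟩
    have := B.apply_root_self_ne_four_of_eq_six hirred (j := j) hi
    rcases hlen j with h | h | h <;> grind
  · refine ⟨2, by norm_num, by simpa using h6, fun j ↦ ?_⟩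
    have := fun h ↦ h6 ⟨j, h⟩
    rcases hlen j with h | h | h <;> grind

lemma sub_mem_range_root_of_exists_apply_root_self_eq_six (hpos : ∀ x, x ≠ 0 → 0 < B.form x x)
    {a b c : ι} (habc : P.root b + P.root c = P.root a) (ha : B.form (P.root a) (P.root a) = 2)
    (hb : B.form (P.root b) (P.root b) = 2) (hc : B.form (P.root c) (P.root c) = 2)
    (h6 : ∃ i, B.form (P.root i) (P.root i) = 6) :
    P.root b - P.root c ∈ range P.root := by
  have hbc : B.form (P.root b) (P.root c) = -1 := by
    rw [← habc] at ha
    simp only [map_add, LinearMap.add_apply, B.form_comm (P.root c) (P.root b)] at ha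
    linarith
  obtain ⟨d, hd, hdc⟩ : ∃ d, B.form (P.root d) (P.root d) = 6 ∧
      B.form (P.root d) (P.root c) = 3 := by
    obtain ⟨i, hi⟩ := h6
    obtain ⟨k, hk, hkc⟩ := B.exists_apply_root_self_eq_apply_ne_zero hirred i c
    rw [hi] at hk
    rcases B.apply_root_root_eq_zero_or_of_apply_self_eq_three_mul (j := c)
      (by rw [hk, hc]; norm_num) with h | h | h
    · exact absurd h hkc
    · exact ⟨k, hk, by linarith⟩
    · refine ⟨P.reflectionPerm k k, ?_, ?_⟩ <;>
        simp only [root_reflectionPerm, reflection_apply_self, map_neg, LinearMap.neg_apply,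
          neg_neg] <;> linarith
  -- `δ·β ∈ {0, 3, -3}`, and `δ·β = 3` would give `δ·α = 6`, too large for `|δ|² = 6`, `|α|² = 2`
  rcases B.apply_root_root_eq_zero_or_of_apply_self_eq_three_mul (j := b)
    (by rw [hd, hb]; norm_num) with hdb | hdb | hdb
  · have hpair : P.pairing d c = 3 := by
      have := B.two_mul_apply_root_root d c
      rw [hdc, hc] at this
      linarith
    have hdbc : P.root d = P.root b + (2 : ℝ) • P.root c := by
      apply B.eq_of_form_apply_eq hpos
      · simp only [map_add, map_smul, smul_eq_mul]
        linarith
      · simp only [map_add, map_smul, LinearMap.add_apply, LinearMap.smul_apply, smul_eq_mul,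
          B.form_comm (P.root c) (P.root b)]
        linarith
    refine ⟨P.reflectionPerm c d, ?_⟩
    rw [root_reflectionPerm, reflection_apply_root, hpair, hdbc]
    module
  · have hda : B.form (P.root d) (P.root a) = 6 := by
      rw [← habc, map_add, hdc]
      linarith
    rcases B.apply_root_root_eq_zero_or_of_apply_self_eq_three_mul (j := a)
      (by rw [hd, ha]; norm_num) with h | h | h <;> norm_num [hda, ha] at h
  · have hdcb : P.root d = P.root c - P.root b := by
      apply B.eq_of_form_apply_eq hpos
      · simp only [map_sub]
        linarith
      · simp only [map_sub, LinearMap.sub_apply, B.form_comm (P.root c) (P.root b)]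
        linarith
    rw [← neg_mem_range_root_iff, neg_sub, ← hdcb]
    exact mem_range_self d

theorem chainBotCoeff_of_add_eq_root (hpos : ∀ x, x ≠ 0 → 0 < B.form x x)
    (hnorm : ∀ i, 2 ≤ B.form (P.root i) (P.root i))
    (hshort : ∃ i, B.form (P.root i) (P.root i) = 2) {a b c : ι}
    (habc : P.root b + P.root c = P.root a) (dA dB dG : ℤ)
    (hdA : (dA : ℝ) = B.form (P.root a) (P.root a) / 2)
    (hdB : (dB : ℝ) = B.form (P.root b) (P.root b) / 2)
    (hdG : (dG : ℝ) = B.form (P.root c) (P.root c) / 2) :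
    ((dA = 3 ∧ dB = 1 ∧ dG = 1) → (P.chainBotCoeff c b : ℤ) = 2) ∧
    ((dA = 2 ∧ dB = 1 ∧ dG = 1) → (P.chainBotCoeff c b : ℤ) = 1) ∧
    ((dA = 1 ∧ dB = 1 ∧ dG = 1 ∧ ∃ i : ι, B.form (P.root i) (P.root i) = 6) →
      (P.chainBotCoeff c b : ℤ) = 1) ∧
    ((¬ (dA = 3 ∧ dB = 1 ∧ dG = 1) ∧ ¬ (dA = 2 ∧ dB = 1 ∧ dG = 1) ∧
        ¬ (dA = 1 ∧ dB = 1 ∧ dG = 1 ∧ ∃ i : ι, B.form (P.root i) (P.root i) = 6)) →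
      (P.chainBotCoeff c b : ℤ) = 0 ∧ dA = min dB dG) := by
  obtain ⟨w, hw, hlong, hlen⟩ := B.exists_forall_apply_root_self_eq hirred hnorm hshort
  have hd (d : ℤ) {x : M} (hx : x ∈ range P.root) (h : (d : ℝ) = B.form x x / 2) :
      d = 1 ∨ d = w := by
    obtain ⟨j, rfl⟩ := hx
    rcases hlen j with h' | h' <;> rw [h'] at h
    · exact .inl (by exact_mod_cast (by linarith : (d : ℝ) = 1))
    · exact .inr (by exact_mod_cast (by linarith : (d : ℝ) = w))
  have hpol : 2 * B.form (P.root b) (P.root c) = 2 * (dA - dB - dG) := by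
    rw [hdA, hdB, hdG, ← habc]
    simp only [map_add, LinearMap.add_apply, B.form_comm (P.root c) (P.root b)]
    ring
  have hcb : P.root c + P.root b ∈ range P.root := by rw [add_comm, habc]; exact mem_range_self a
  have hli : LinearIndependent ℝ ![P.root c, P.root b] :=
    P.linearIndependent_of_add_mem_range_root' hcb
  have hq1 : 1 ≤ P.chainBotCoeff c b ↔ P.root b - P.root c ∈ range P.root := by
    simpa using (P.root_sub_nsmul_mem_range_iff_le_chainBotCoeff hli (n := 1)).symm
  rw [hlong]
  refine root_string_case_analysis hw (hd dA ⟨a, rfl⟩ hdA) (hd dB ⟨b, rfl⟩ hdB) (hd dG ⟨c, rfl⟩ hdG)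
    (n := P.pairingIn ℤ b c) (m := P.pairingIn ℤ c b) ?_ ?_
    (P.chainBotCoeff_sub_chainTopCoeff hli) (by positivity)
    (by exact_mod_cast P.one_le_chainTopCoeff_of_root_add_mem hcb)
    (by exact_mod_cast P.chainBotCoeff_add_chainTopCoeff_le_three) ?_ ?_
  · have := B.pairingIn_mul_apply_root_self b c
    rw [show B.form (P.root c) (P.root c) = 2 * dG by linarith] at this
    exact_mod_cast (by linarith : (P.pairingIn ℤ b c : ℝ) * dG = dA - dB - dG)
  · have := B.pairingIn_mul_apply_root_self c b
    rw [B.form_comm (P.root c), show B.form (P.root b) (P.root b) = 2 * dB by linarith] at this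
    exact_mod_cast (by linarith : (P.pairingIn ℤ c b : ℝ) * dB = dA - dB - dG)
  · intro h
    refine hd _ (hq1.mp (by exact_mod_cast h)) ?_
    simp only [map_sub, LinearMap.sub_apply, B.form_comm (P.root c) (P.root b)]
    push_cast
    linarith
  · rintro h3 rfl rfl rfl
    push_cast at hdA hdB hdG
    exact_mod_cast hq1.mpr <| B.sub_mem_range_root_of_exists_apply_root_self_eq_six hirred hpos
      habc (by linarith) (by linarith) (by linarith) (hlong.mpr h3)

end Irreducible

end InvariantForm
end RootPairing

theorem stmt6_general {ι M N : Type*} [AddCommGroup M] [Module ℝ M] [AddCommGroup N] [Module ℝ N]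
    [Finite ι] (P : RootPairing ι ℝ M N)
    (hcrys : P.IsCrystallographic) (hred : P.IsReduced)
    (B : M →ₗ[ℝ] M →ₗ[ℝ] ℝ)
    (hBsymm : ∀ x y : M, B x y = B y x)
    (hBpos : ∀ x : M, x ≠ 0 → 0 < B x x)
    (hBinv : ∀ (i : ι) (x y : M), B (P.reflection i x) (P.reflection i y) = B x y)
    (hnorm : ∀ i : ι, 2 ≤ B (P.root i) (P.root i))
    (hshort : ∃ i : ι, B (P.root i) (P.root i) = 2)
    (hirred : ∀ s : Set ι, s.Nonempty → sᶜ.Nonempty →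
      ∃ i ∈ s, ∃ j ∈ sᶜ, B (P.root i) (P.root j) ≠ 0)
    (Rplus : Set M)
    (hpos : ∃ f : M →ₗ[ℝ] ℝ, Rplus = {x | x ∈ Set.range P.root ∧ 0 < f x})
    (α β γ : M) (hα : α ∈ Rplus) (hβ : β ∈ Rplus) (hγ : γ ∈ Rplus) (hsum : β + γ = α)
    (p : ℤ) (hp : β - p • γ ∈ Set.range P.root)
    (hpmax : ∀ q : ℤ, β - q • γ ∈ Set.range P.root → q ≤ p)
    (dA dB dG : ℤ)
    (hdA : (dA : ℝ) = B α α / 2) (hdB : (dB : ℝ) = B β β / 2)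
    (hdG : (dG : ℝ) = B γ γ / 2) :
    ((dA = 3 ∧ dB = 1 ∧ dG = 1) → p = 2) ∧
    ((dA = 2 ∧ dB = 1 ∧ dG = 1) → p = 1) ∧
    ((dA = 1 ∧ dB = 1 ∧ dG = 1 ∧ ∃ i : ι, B (P.root i) (P.root i) = 6) → p = 1) ∧
    ((¬ (dA = 3 ∧ dB = 1 ∧ dG = 1) ∧ ¬ (dA = 2 ∧ dB = 1 ∧ dG = 1) ∧
        ¬ (dA = 1 ∧ dB = 1 ∧ dG = 1 ∧ ∃ i : ι, B (P.root i) (P.root i) = 6)) →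
      p = 0 ∧ dA = min dB dG) := by
  have := hcrys
  have := hred
  obtain ⟨f, rfl⟩ := hpos
  obtain ⟨⟨a, rfl⟩, -⟩ := hα
  obtain ⟨⟨b, rfl⟩, -⟩ := hβ
  obtain ⟨⟨c, rfl⟩, -⟩ := hγ
  have hli : LinearIndependent ℝ ![P.root c, P.root b] :=
    P.linearIndependent_of_add_mem_range_root' (by rw [add_comm, hsum]; exact mem_range_self a)
  obtain rfl : p = P.chainBotCoeff c b := by
    have hiff (q : ℤ) := P.root_sub_zsmul_mem_range_iff hli (z := q)
    exact le_antisymm ((hiff p).mp hp).2 (hpmax _ ((hiff _).mpr ⟨by omega, le_rfl⟩))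
  exact (RootPairing.InvariantForm.ofPosDef B hBsymm hBpos hBinv).chainBotCoeff_of_add_eq_root
    hirred hBpos hnorm hshort hsum dA dB dG hdA hdB hdG

/-- Let `R` be a finite, reduced, crystallographic, irreducible root system
with a Weyl-invariant positive definite symmetric bilinear form `B` normalized so that
short roots have squared length `2`, and let `Rplus` be a positive system.  Suppose
`α, β, γ` are positive roots with `β + γ = α`, and write `d_α = α·α/2` etc. and
`p = p_{β,γ}`.  Then `p = 2` if `d_α = 3` and `d_β = d_γ = 1`; `p = 1` if `d_α = 2` and
`d_β = d_γ = 1`; `p = 1` if `d_α = d_β = d_γ = 1` and `R` contains a root of squared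
length `6` (type `G₂`); and otherwise `p = 0` and moreover `d_α = min d_β d_γ`. -/
theorem stmt6 {ι M N : Type*} [AddCommGroup M] [Module ℝ M] [AddCommGroup N] [Module ℝ N]
    [Finite ι] (P : RootPairing ι ℝ M N) (hspan : Submodule.span ℝ (Set.range P.root) = ⊤)
    (hcrys : P.IsCrystallographic) (hred : P.IsReduced)
    (B : M →ₗ[ℝ] M →ₗ[ℝ] ℝ)
    (hBsymm : ∀ x y : M, B x y = B y x)
    (hBpos : ∀ x : M, x ≠ 0 → 0 < B x x)
    (hBinv : ∀ (i : ι) (x y : M), B (P.reflection i x) (P.reflection i y) = B x y)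
    (hnorm : ∀ i : ι, 2 ≤ B (P.root i) (P.root i))
    (hshort : ∃ i : ι, B (P.root i) (P.root i) = 2)
    (hirred : ∀ s : Set ι, s.Nonempty → sᶜ.Nonempty →
      ∃ i ∈ s, ∃ j ∈ sᶜ, B (P.root i) (P.root j) ≠ 0)
    (Rplus : Set M)
    (hpos : ∃ f : M →ₗ[ℝ] ℝ, Rplus = {x | x ∈ Set.range P.root ∧ 0 < f x})
    (α β γ : M) (hα : α ∈ Rplus) (hβ : β ∈ Rplus) (hγ : γ ∈ Rplus) (hsum : β + γ = α)
    (p : ℤ) (hp : β - p • γ ∈ Set.range P.root)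
    (hpmax : ∀ q : ℤ, β - q • γ ∈ Set.range P.root → q ≤ p)
    (dA dB dG : ℤ)
    (hdA : (dA : ℝ) = B α α / 2) (hdB : (dB : ℝ) = B β β / 2)
    (hdG : (dG : ℝ) = B γ γ / 2) :
    ((dA = 3 ∧ dB = 1 ∧ dG = 1) → p = 2) ∧
    ((dA = 2 ∧ dB = 1 ∧ dG = 1) → p = 1) ∧
    ((dA = 1 ∧ dB = 1 ∧ dG = 1 ∧ ∃ i : ι, B (P.root i) (P.root i) = 6) → p = 1) ∧
    ((¬ (dA = 3 ∧ dB = 1 ∧ dG = 1) ∧ ¬ (dA = 2 ∧ dB = 1 ∧ dG = 1) ∧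
        ¬ (dA = 1 ∧ dB = 1 ∧ dG = 1 ∧ ∃ i : ι, B (P.root i) (P.root i) = 6)) →
      p = 0 ∧ dA = min dB dG) :=
  stmt6_general P hcrys hred B hBsymm hBpos hBinv hnorm hshort hirred Rplus hpos α β γ hα hβ hγ hsum
    p hp hpmax dA dB dG hdA hdB hdG
end

section
/- Let R be a finite, reduced, crystallographic, irreducible root system with a Weyl-invariant positive-definite symmetric bilinear form normalized so that short roots have squared length 2, and let R⁺ be a positive system. For any β, γ ∈ R⁺ with β + γ ∈ R⁺, one has p_{β,γ} > β·γ (that is, p_{β,γ} − β·γ is a strictly positive integer). -/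
/-!
Put `c = ⟨β, γ^∨⟩`, so that `2 β·γ = c |γ|²`. Reflecting the root `β + γ` in `γ` gives the root
`β - (c + 1) γ`, hence `p ≥ c + 1` and it suffices to show `β·γ ≤ c`. For `c ≤ 0` this follows
from `|γ|² ≥ 2`. For `c > 0` the pairing of `β + γ` with `γ` is `c + 2 ≤ 3`, which forces `c = 1`
and `|β + γ|² = 3 |γ|²`. In an irreducible system every root is non-orthogonal to some short root,
so no squared length exceeds `3 · 2`; thus `|γ|² = 2` and `β·γ = 1 = c`.
-/

open Set Submodule

namespace RootPairing

variable {ι K M N : Type*} [Field K] [AddCommGroup M] [Module K M] [AddCommGroup N] [Module K N]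
  {P : RootPairing ι K M N}

lemma root_mem_span_pair_of_pairing_ne_zero {i j : ι} (h : P.pairing i j ≠ 0) :
    P.root j ∈ span K {P.root i, P.root (P.reflectionPerm j i)} := by
  have hj : P.root j = (P.pairing i j)⁻¹ • (P.root i - P.root (P.reflectionPerm j i)) := by
    rw [root_reflectionPerm, reflection_apply_root, sub_sub_cancel, smul_smul,
      inv_mul_cancel₀ h, one_smul]
  rw [hj]
  exact smul_mem _ _ (sub_mem (subset_span (by simp)) (subset_span (by simp)))

/-- A root non-orthogonal to `α t` lies in the span of `α t` and its reflection, so the roots in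
the span of `T` and the roots orthogonal to `T` exhaust `ι`. -/
lemma InvariantForm.exists_apply_root_ne_zero_of_reflectionPerm_mem [NeZero (2 : K)]
    (B : P.InvariantForm)
    (hirred : ∀ s : Set ι, s.Nonempty → sᶜ.Nonempty →
      ∃ i ∈ s, ∃ j ∈ sᶜ, B.form (P.root i) (P.root j) ≠ 0)
    {T : Set ι} (hT : T.Nonempty) (hT_refl : ∀ i ∈ T, ∀ j, P.reflectionPerm j i ∈ T) (k : ι) :
    ∃ t ∈ T, B.form (P.root t) (P.root k) ≠ 0 := by
  set V := span K (P.root '' T)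
  have orth : ∀ j, (∀ t ∈ T, B.form (P.root t) (P.root j) = 0) →
      ∀ x ∈ V, B.form x (P.root j) = 0 := fun j hj x hx ↦
    (span_le (p := LinearMap.ker (B.form.flip (P.root j))) |>.mpr
      (by rintro _ ⟨t, ht, rfl⟩; exact hj t ht)) hx
  have mem : ∀ t ∈ T, ∀ j, B.form (P.root t) (P.root j) ≠ 0 → P.root j ∈ V := by
    intro t ht j h
    refine span_le.mpr ?_
      (root_mem_span_pair_of_pairing_ne_zero ((B.apply_root_root_zero_iff t j).not.mp h))
    rw [insert_subset_iff, singleton_subset_iff]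
    exact ⟨subset_span ⟨t, ht, rfl⟩, subset_span ⟨_, hT_refl t ht j, rfl⟩⟩
  by_contra! hk
  obtain ⟨i, hi, j, hj, hij⟩ := hirred {j | P.root j ∈ V}
    (hT.mono fun t ht ↦ subset_span ⟨t, ht, rfl⟩) ⟨k, fun hkV ↦ B.ne_zero k (orth k hk _ hkV)⟩
  rcases em (∃ t ∈ T, B.form (P.root t) (P.root j) ≠ 0) with ⟨t, ht, htj⟩ | hjT
  · exact hj (mem t ht j htj)
  · exact hij (orth j (by simpa using hjT) _ hi)

variable [CharZero K] [P.IsCrystallographic]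

lemma root_sub_zsmul_mem_range_of_root_add_eq {i j k : ι} (h : P.root k = P.root i + P.root j) :
    P.root i - (P.pairingIn ℤ i j + 1) • P.root j ∈ range P.root := by
  refine ⟨P.reflectionPerm j k, ?_⟩
  rw [root_reflectionPerm, reflection_apply_root' ℤ, pairingIn_eq_add_of_root_eq_add h,
    pairingIn_same, h]
  module

variable [Finite ι] [P.IsReduced]

lemma pairingIn_le_three (i j : ι) : P.pairingIn ℤ i j ≤ 3 := by
  have := P.pairingIn_pairingIn_mem_set_of_isCrystal_of_isRed i j
  simp only [mem_insert_iff, mem_singleton_iff, Prod.mk.injEq] at this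
  omega

lemma pairingIn_eq_one_of_pairingIn_eq_three {i j : ι} (h : P.pairingIn ℤ i j = 3) :
    P.pairingIn ℤ j i = 1 := by
  have := P.pairingIn_pairingIn_mem_set_of_isCrystal_of_isRed i j
  simp only [mem_insert_iff, mem_singleton_iff, Prod.mk.injEq] at this
  omega

namespace InvariantForm

variable (B : P.InvariantForm)

lemma apply_root_self_eq_three_mul_of_pairingIn_eq_three {i j : ι} (h : P.pairingIn ℤ i j = 3) :
    B.form (P.root i) (P.root i) = 3 * B.form (P.root j) (P.root j) := by
  have hji := pairingIn_eq_one_of_pairingIn_eq_three h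
  have := B.pairing_mul_eq_pairing_mul_swap i j
  rw [← P.algebraMap_pairingIn ℤ, ← P.algebraMap_pairingIn ℤ, h, hji] at this
  simpa using this

variable [LinearOrder K] [IsStrictOrderedRing K]

lemma apply_root_self_le_three_mul (hB : ∀ i, 0 < B.form (P.root i) (P.root i)) {i k : ι}
    (h : B.form (P.root i) (P.root k) ≠ 0) :
    B.form (P.root k) (P.root k) ≤ 3 * B.form (P.root i) (P.root i) := by
  have hik : P.pairingIn ℤ i k ≠ 0 := by
    rwa [ne_eq, ← (FaithfulSMul.algebraMap_injective ℤ K).eq_iff, algebraMap_pairingIn, map_zero,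
      ← B.apply_root_root_zero_iff]
  have hswap := B.pairing_mul_eq_pairing_mul_swap i k
  rw [← P.algebraMap_pairingIn ℤ, ← P.algebraMap_pairingIn ℤ] at hswap
  have := P.pairingIn_pairingIn_mem_set_of_isCrystal_of_isRed k i
  have hi := hB i
  have hk := hB k
  simp only [mem_insert_iff, mem_singleton_iff, Prod.mk.injEq] at this
  rcases this with ⟨h₁, h₂⟩ | ⟨h₁, h₂⟩ | ⟨h₁, h₂⟩ | ⟨h₁, h₂⟩ | ⟨h₁, h₂⟩ | ⟨h₁, h₂⟩ | ⟨h₁, h₂⟩ |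
    ⟨h₁, h₂⟩ | ⟨h₁, h₂⟩ | ⟨h₁, h₂⟩ | ⟨h₁, h₂⟩ | ⟨h₁, h₂⟩ | ⟨h₁, h₂⟩ <;>
  simp only [h₁, h₂] at hswap hik <;> norm_num at hswap hik <;> linarith

lemma apply_root_self_le_three_mul_of_irreducible (hB : ∀ i, 0 < B.form (P.root i) (P.root i))
    (hirred : ∀ s : Set ι, s.Nonempty → sᶜ.Nonempty →
      ∃ i ∈ s, ∃ j ∈ sᶜ, B.form (P.root i) (P.root j) ≠ 0) (i k : ι) :
    B.form (P.root k) (P.root k) ≤ 3 * B.form (P.root i) (P.root i) := by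
  obtain ⟨t, ht, htk⟩ := B.exists_apply_root_ne_zero_of_reflectionPerm_mem hirred
    (T := {t | B.form (P.root t) (P.root t) = B.form (P.root i) (P.root i)}) ⟨i, rfl⟩
    (fun t ht j ↦ by simpa [root_reflectionPerm] using ht) k
  exact ht ▸ B.apply_root_self_le_three_mul hB htk

end InvariantForm

end RootPairing

theorem stmt7_general {ι M N : Type*} [AddCommGroup M] [Module ℝ M] [AddCommGroup N] [Module ℝ N]
    [Finite ι] (P : RootPairing ι ℝ M N)
    (hcrys : P.IsCrystallographic) (hred : P.IsReduced)
    (B : M →ₗ[ℝ] M →ₗ[ℝ] ℝ)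
    (hBsymm : ∀ x y : M, B x y = B y x)
    (hBpos : ∀ x : M, x ≠ 0 → 0 < B x x)
    (hBinv : ∀ (i : ι) (x y : M), B (P.reflection i x) (P.reflection i y) = B x y)
    (hnorm : ∀ i : ι, 2 ≤ B (P.root i) (P.root i))
    (hshort : ∃ i : ι, B (P.root i) (P.root i) = 2)
    (hirred : ∀ s : Set ι, s.Nonempty → sᶜ.Nonempty →
      ∃ i ∈ s, ∃ j ∈ sᶜ, B (P.root i) (P.root j) ≠ 0)
    (Rplus : Set M)
    (hpos : ∃ f : M →ₗ[ℝ] ℝ, Rplus = {x | x ∈ Set.range P.root ∧ 0 < f x})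
    (β γ : M) (hβ : β ∈ Rplus) (hγ : γ ∈ Rplus) (hsum : β + γ ∈ Rplus)
    (p : ℤ)
    (hpmax : ∀ q : ℤ, β - q • γ ∈ Set.range P.root → q ≤ p)
    (bg : ℤ) (hbg : (bg : ℝ) = B β γ) :
    bg < p := by
  let Φ : P.InvariantForm := ⟨B, ⟨hBsymm⟩, fun i ↦ (hBpos _ (P.ne_zero i)).ne', hBinv⟩
  have hΦ (i : ι) : 0 < Φ.form (P.root i) (P.root i) := hBpos _ (P.ne_zero i)
  obtain ⟨f, rfl⟩ := hpos
  obtain ⟨⟨b, rfl⟩, -⟩ := hβ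
  obtain ⟨⟨g, rfl⟩, -⟩ := hγ
  obtain ⟨⟨d, hd⟩, -⟩ := hsum
  set c := P.pairingIn ℤ b g
  have hcp : c + 1 ≤ p := hpmax _ (P.root_sub_zsmul_mem_range_of_root_add_eq hd)
  have hbgc : 2 * (bg : ℝ) = c * B (P.root g) (P.root g) := by
    rw [hbg, ← eq_intCast (algebraMap ℤ ℝ), P.algebraMap_pairingIn ℤ]
    exact Φ.two_mul_apply_root_root b g
  suffices bg ≤ c by omega
  rcases le_or_gt c 0 with hc | hc
  · have hc' : (c : ℝ) ≤ 0 := by exact_mod_cast hc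
    exact_mod_cast (show (bg : ℝ) ≤ c by nlinarith [hnorm g])
  · have hdg : P.pairingIn ℤ d g = c + 2 := by
      rw [P.pairingIn_eq_add_of_root_eq_add hd, P.pairingIn_same]
    have hc1 : c = 1 := by linarith [P.pairingIn_le_three d g]
    have hLd : B (P.root d) (P.root d) = 3 * B (P.root g) (P.root g) :=
      Φ.apply_root_self_eq_three_mul_of_pairingIn_eq_three (by omega)
    obtain ⟨s, hs⟩ := hshort
    have hLd_le : B (P.root d) (P.root d) ≤ 3 * B (P.root s) (P.root s) :=
      Φ.apply_root_self_le_three_mul_of_irreducible hΦ hirred s d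
    rw [hc1] at hbgc ⊢
    exact_mod_cast (show (bg : ℝ) ≤ 1 by push_cast at hbgc; linarith)

/-- Let `R` be a finite, reduced, crystallographic, irreducible root system
with a Weyl-invariant positive definite symmetric bilinear form `B` normalized so that
short roots have squared length `2`, and let `Rplus` be a positive system.  For positive
roots `β, γ` with `β + γ` again a positive root, one has `p_{β,γ} > β·γ`. -/
theorem stmt7 {ι M N : Type*} [AddCommGroup M] [Module ℝ M] [AddCommGroup N] [Module ℝ N]
    [Finite ι] (P : RootPairing ι ℝ M N) [P.IsRootSystem]
    (hcrys : P.IsCrystallographic) (hred : P.IsReduced)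
    (B : M →ₗ[ℝ] M →ₗ[ℝ] ℝ)
    (hBsymm : ∀ x y : M, B x y = B y x)
    (hBpos : ∀ x : M, x ≠ 0 → 0 < B x x)
    (hBinv : ∀ (i : ι) (x y : M), B (P.reflection i x) (P.reflection i y) = B x y)
    (hnorm : ∀ i : ι, 2 ≤ B (P.root i) (P.root i))
    (hshort : ∃ i : ι, B (P.root i) (P.root i) = 2)
    (hirred : ∀ s : Set ι, s.Nonempty → sᶜ.Nonempty →
      ∃ i ∈ s, ∃ j ∈ sᶜ, B (P.root i) (P.root j) ≠ 0)
    (Rplus : Set M)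
    (hpos : ∃ f : M →ₗ[ℝ] ℝ, Rplus = {x | x ∈ Set.range P.root ∧ 0 < f x})
    (β γ : M) (hβ : β ∈ Rplus) (hγ : γ ∈ Rplus) (hsum : β + γ ∈ Rplus)
    (p : ℤ) (hp : β - p • γ ∈ Set.range P.root)
    (hpmax : ∀ q : ℤ, β - q • γ ∈ Set.range P.root → q ≤ p)
    (bg : ℤ) (hbg : (bg : ℝ) = B β γ) :
    bg < p :=
  stmt7_general P hcrys hred B hBsymm hBpos hBinv hnorm hshort hirred Rplus hpos β γ hβ hγ hsum p
    hpmax bg hbg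
end

section
/- Fix a finite set I and a symmetric function a : I × I → ℤ. For all words 𝒊 of length m and 𝒋 of length n over I, the quantum shuffle product in the free ℤ[q,q⁻¹]-module on words satisfies bar(𝒊 ∘ 𝒋) = q^{|𝒊|·|𝒋|} · (𝒋 ∘ 𝒊), where |𝒊|·|𝒋| := Σ_{s=1}^{m} Σ_{t=1}^{n} a(i_s, j_t). -/
open LaurentPolynomial

/-- The action of a permutation `w` on a word `k`: the `t`-th letter of `w(k)` is the
`w⁻¹(t)`-th letter of `k`. -/
def permWord {I : Type*} (k : List I) (w : Equiv.Perm (Fin k.length)) : List I :=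
  List.ofFn fun t => k.get (w⁻¹ t)

/-- `deg(w; k) := -∑_{s < t, w(s) > w(t)} a (k_s) (k_t)`. -/
noncomputable def shuffleDeg {I : Type*} (a : I → I → ℤ) (k : List I)
    (w : Equiv.Perm (Fin k.length)) : ℤ :=
  -∑ st ∈ Finset.univ.filter
      (fun st : Fin k.length × Fin k.length => st.1 < st.2 ∧ w st.2 < w st.1),
    a (k.get st.1) (k.get st.2)

/-- `w` is an `(m, N-m)`-shuffle: it is increasing on `{0, …, m-1}` and on `{m, …, N-1}`. -/
def IsShuffle (m : ℕ) {N : ℕ} (w : Equiv.Perm (Fin N)) : Prop :=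
  (∀ s t : Fin N, s < t → (t : ℕ) < m → w s < w t) ∧
  (∀ s t : Fin N, s < t → m ≤ (s : ℕ) → w s < w t)

open scoped Classical in
/-- The quantum shuffle product of the words `il` and `jl`, as an element of the free
`ℤ[q,q⁻¹]`-module on the set of words:
`il ∘ jl = ∑_w q^{deg(w; il jl)} w(il jl)`, summed over all `(m,n)`-shuffles `w`. -/
noncomputable def qshuffle {I : Type*} (a : I → I → ℤ) (il jl : List I) :
    (List I) →₀ LaurentPolynomial ℤ :=
  ∑ w : Equiv.Perm (Fin (il ++ jl).length),
    if IsShuffle il.length w then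
      Finsupp.single (permWord (il ++ jl) w) (T (shuffleDeg a (il ++ jl) w))
    else 0

/-!
Let `τ` (`appendSwap`) be the block rotation matching the positions of `jl ++ il` with the positions of `il ++ jl`
carrying the same letter. Then `w ↦ w ∘ τ` is a bijection from the `(m, n)`-shuffles of `il ++ jl`
to the `(n, m)`-shuffles of `jl ++ il` producing the same word. A shuffle only inverts cross pairs
(a letter of `il`, a letter of `jl`), and each cross pair is inverted by exactly one of `w` and
`w ∘ τ`; as `a` is symmetric, `deg w + deg (w ∘ τ) = -|il|·|jl|`. Hence the bar involution turns
`q^{deg w}` into `q^{|il|·|jl|} q^{deg (w ∘ τ)}`, term by term.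
-/

section

variable {I : Type*}

lemma isShuffle_iff {m N : ℕ} (w : Equiv.Perm (Fin N)) :
    IsShuffle m w ↔
      ∀ s t : Fin N, s < t → ((t : ℕ) < m ∨ m ≤ (s : ℕ)) → w s < w t := by
  refine ⟨fun hw s t hst hblock => hblock.elim (hw.1 s t hst) (hw.2 s t hst),
    fun hw => ⟨fun s t hst ht => hw s t hst (.inl ht), fun s t hst hs => hw s t hst (.inr hs)⟩⟩

lemma permWord_trans_finCongr {k k' : List I} (e : Fin k'.length ≃ Fin k.length)
    (he : ∀ u, k.get (e u) = k'.get u) (h : k.length = k'.length)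
    (w : Equiv.Perm (Fin k.length)) :
    permWord k' ((e.trans w).trans (finCongr h)) = permWord k w := by
  unfold permWord
  refine List.ext_get (by simp [h]) fun t _ _ => ?_
  simp only [List.get_ofFn, Equiv.Perm.inv_def, Equiv.symm_trans_apply, ← he,
    Equiv.apply_symm_apply]
  rfl

variable (il jl : List I)

def leftPos (s : Fin il.length) : Fin (il ++ jl).length :=
  ⟨s, by simp only [List.length_append]; omega⟩

def rightPos (t : Fin jl.length) : Fin (il ++ jl).length :=
  ⟨il.length + t, by simp only [List.length_append]; omega⟩

lemma get_leftPos (s : Fin il.length) : (il ++ jl).get (leftPos il jl s) = il.get s :=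
  List.getElem_append_left s.isLt

lemma get_rightPos (t : Fin jl.length) : (il ++ jl).get (rightPos il jl t) = jl.get t := by
  simp [rightPos, List.getElem_append_right]

def appendSwap : Fin (jl ++ il).length ≃ Fin (il ++ jl).length :=
  (finCongr List.length_append).trans (finAddFlip.trans (finCongr List.length_append.symm))

lemma appendSwap_val (u : Fin (jl ++ il).length) :
    (appendSwap il jl u : ℕ) = if (u : ℕ) < jl.length then u + il.length else u - jl.length := by
  have hu : (u : ℕ) < jl.length + il.length := by simpa using u.isLt
  have hcast : finCongr List.length_append u = ⟨u, hu⟩ := rfl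
  simp only [appendSwap, Equiv.trans_apply, hcast, finCongr_apply, Fin.val_cast]
  split_ifs with h
  · rw [finAddFlip_apply_mk_left h]; exact Nat.add_comm _ _
  · rw [finAddFlip_apply_mk_right (not_lt.1 h) hu]

lemma appendSwap_leftPos (t : Fin jl.length) :
    appendSwap il jl (leftPos jl il t) = rightPos il jl t :=
  Fin.ext <| by simp [appendSwap_val, leftPos, rightPos, Nat.add_comm]

lemma appendSwap_rightPos (s : Fin il.length) :
    appendSwap il jl (rightPos jl il s) = leftPos il jl s :=
  Fin.ext <| by simp [appendSwap_val, leftPos, rightPos]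

lemma get_appendSwap (u : Fin (jl ++ il).length) :
    (il ++ jl).get (appendSwap il jl u) = (jl ++ il).get u := by
  have hu : (u : ℕ) < jl.length + il.length := by simpa using u.isLt
  simp only [List.get_eq_getElem, List.getElem_append, appendSwap_val]
  split_ifs <;> first | omega | congr 1 <;> omega

lemma appendSwap_lt_appendSwap_iff (u u' : Fin (jl ++ il).length) :
    (appendSwap il jl u < appendSwap il jl u' ∧
        ((appendSwap il jl u' : ℕ) < il.length ∨ il.length ≤ appendSwap il jl u)) ↔
      (u < u' ∧ ((u' : ℕ) < jl.length ∨ jl.length ≤ u)) := by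
  have hu : (u : ℕ) < jl.length + il.length := by simpa using u.isLt
  have hu' : (u' : ℕ) < jl.length + il.length := by simpa using u'.isLt
  simp only [Fin.lt_def, appendSwap_val]
  split_ifs <;> omega

/-- `w ↦ w ∘ τ`, followed by the cast `(il ++ jl).length = (jl ++ il).length` on values. -/
def swapPerm : Equiv.Perm (Fin (il ++ jl).length) ≃ Equiv.Perm (Fin (jl ++ il).length) :=
  (appendSwap il jl).symm.equivCongr (finCongr (by simp [Nat.add_comm]))

lemma swapPerm_lt_swapPerm_iff (w : Equiv.Perm (Fin (il ++ jl).length))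
    (u u' : Fin (jl ++ il).length) :
    swapPerm il jl w u < swapPerm il jl w u' ↔ w (appendSwap il jl u) < w (appendSwap il jl u') :=
  Iff.rfl

lemma permWord_swapPerm (w : Equiv.Perm (Fin (il ++ jl).length)) :
    permWord (jl ++ il) (swapPerm il jl w) = permWord (il ++ jl) w :=
  permWord_trans_finCongr _ (get_appendSwap il jl) _ w

lemma isShuffle_swapPerm_iff (w : Equiv.Perm (Fin (il ++ jl).length)) :
    IsShuffle jl.length (swapPerm il jl w) ↔ IsShuffle il.length w := by
  rw [isShuffle_iff, isShuffle_iff, ← (appendSwap il jl).forall_congr_right]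
  refine forall_congr' fun u => ?_
  rw [← (appendSwap il jl).forall_congr_right]
  refine forall_congr' fun u' => ?_
  rw [swapPerm_lt_swapPerm_iff, ← and_imp, ← and_imp, appendSwap_lt_appendSwap_iff]

def crossInversions (w : Equiv.Perm (Fin (il ++ jl).length)) :
    Finset (Fin il.length × Fin jl.length) :=
  Finset.univ.filter fun p => w (rightPos il jl p.2) < w (leftPos il jl p.1)

variable {il jl} in
lemma IsShuffle.lt_length_le_of_inversion {w : Equiv.Perm (Fin (il ++ jl).length)}
    (hw : IsShuffle il.length w) {s t : Fin (il ++ jl).length} (hst : s < t) (hts : w t < w s) :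
    (s : ℕ) < il.length ∧ il.length ≤ (t : ℕ) :=
  ⟨not_le.1 fun hs => (hw.2 s t hst hs).not_gt hts,
    not_lt.1 fun ht => (hw.1 s t hst ht).not_gt hts⟩

lemma shuffleDeg_eq_neg_sum_crossInversions (a : I → I → ℤ)
    {w : Equiv.Perm (Fin (il ++ jl).length)} (hw : IsShuffle il.length w) :
    shuffleDeg a (il ++ jl) w =
      -∑ p ∈ crossInversions il jl w, a (il.get p.1) (jl.get p.2) := by
  rw [shuffleDeg, neg_inj, eq_comm]
  refine Finset.sum_bij (fun p _ => (leftPos il jl p.1, rightPos il jl p.2)) ?_ ?_ ?_ ?_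
  · intro p hp
    simp only [crossInversions, Finset.mem_filter, Finset.mem_univ, true_and] at hp ⊢
    exact ⟨Fin.lt_def.2 (by simp [leftPos, rightPos]; omega), hp⟩
  · intro p _ q _ h
    simp only [Prod.mk.injEq, leftPos, rightPos, Fin.mk.injEq] at h
    ext <;> omega
  · rintro ⟨s, t⟩ hst
    simp only [Finset.mem_filter, Finset.mem_univ, true_and] at hst
    obtain ⟨hs, ht⟩ := hw.lt_length_le_of_inversion hst.1 hst.2
    have ht' : (t : ℕ) - il.length < jl.length := by
      have : (t : ℕ) < il.length + jl.length := by simpa using t.isLt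
      omega
    have hpos : (leftPos il jl ⟨s, hs⟩, rightPos il jl ⟨t - il.length, ht'⟩) = (s, t) :=
      Prod.ext rfl (Fin.ext (by simp only [rightPos]; omega))
    refine ⟨(⟨s, hs⟩, ⟨t - il.length, ht'⟩), ?_, hpos⟩
    rw [Prod.mk.injEq] at hpos
    simpa [crossInversions, hpos.1, hpos.2] using hst.2
  · intro p _
    rw [get_leftPos, get_rightPos]

lemma crossInversions_swapPerm (w : Equiv.Perm (Fin (il ++ jl).length)) :
    crossInversions jl il (swapPerm il jl w) =
      (crossInversions il jl w)ᶜ.map (Equiv.prodComm _ _).toEmbedding := by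
  ext ⟨t, s⟩
  have hne : w (leftPos il jl s) ≠ w (rightPos il jl t) :=
    w.injective.ne fun h => by simp [leftPos, rightPos, Fin.ext_iff] at h; omega
  simp only [crossInversions, Finset.mem_map_equiv, Finset.mem_compl, Finset.mem_filter,
    Finset.mem_univ, true_and, swapPerm_lt_swapPerm_iff, appendSwap_leftPos, appendSwap_rightPos,
    Equiv.prodComm_symm, Equiv.prodComm_apply, Prod.fst_swap, Prod.snd_swap, not_lt]
  exact ⟨le_of_lt, fun h => h.lt_of_ne hne⟩

lemma shuffleDeg_add_shuffleDeg_swapPerm {a : I → I → ℤ} (hsym : ∀ i j, a i j = a j i)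
    {w : Equiv.Perm (Fin (il ++ jl).length)} (hw : IsShuffle il.length w) :
    shuffleDeg a (il ++ jl) w + shuffleDeg a (jl ++ il) (swapPerm il jl w) =
      -∑ s : Fin il.length, ∑ t : Fin jl.length, a (il.get s) (jl.get t) := by
  rw [shuffleDeg_eq_neg_sum_crossInversions _ _ a hw,
    shuffleDeg_eq_neg_sum_crossInversions _ _ a ((isShuffle_swapPerm_iff il jl w).2 hw),
    crossInversions_swapPerm, Finset.sum_map, ← neg_add, ← Fintype.sum_prod_type']
  simp only [Equiv.coe_toEmbedding, Equiv.prodComm_apply, Prod.fst_swap, Prod.snd_swap,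
    hsym (jl.get _)]
  rw [Finset.sum_add_sum_compl]

end

/-- For a (finite) alphabet `I` and a symmetric `a : I → I → ℤ`, the
quantum shuffle product satisfies `bar (il ∘ jl) = q^{|il|·|jl|} (jl ∘ il)`, where the bar
involution fixes words and sends `q^n` to `q^{-n}`, and
`|il|·|jl| = ∑_{s,t} a (il_s) (jl_t)`. -/
theorem stmt8 {I : Type*} (a : I → I → ℤ) (hsym : ∀ i j, a i j = a j i)
    (il jl : List I) :
    Finsupp.mapRange (fun p : LaurentPolynomial ℤ => LaurentPolynomial.invert p)
        (by simp) (qshuffle a il jl) =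
      (T (∑ s : Fin il.length, ∑ t : Fin jl.length, a (il.get s) (jl.get t)) : LaurentPolynomial ℤ) •
        qshuffle a jl il := by
  rw [qshuffle, qshuffle, Finsupp.mapRange_finsetSum (invert : ℤ[T;T⁻¹] ≃ₐ[ℤ] ℤ[T;T⁻¹]),
    Finset.smul_sum]
  refine Fintype.sum_equiv (swapPerm il jl) _ _ fun w => ?_
  by_cases hw : IsShuffle il.length w
  · rw [if_pos hw, if_pos ((isShuffle_swapPerm_iff il jl w).2 hw), Finsupp.mapRange_single,
      Finsupp.smul_single, invert_T, permWord_swapPerm, smul_eq_mul, ← T_add]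
    congr 2
    linarith [shuffleDeg_add_shuffleDeg_swapPerm il jl hsym hw]
  · rw [if_neg hw, if_neg (mt (isShuffle_swapPerm_iff il jl w).1 hw), Finsupp.mapRange_zero,
      smul_zero]
end
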